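/- arXiv:2605.00581 — 9 statements merged into one kernel-verified Lean document; each statement's English description precedes it below -/
import Mathlib

section
/- Let H be a real Hilbert space, A : H → H a bounded self-adjoint operator with ⟨u, A u⟩ > 0 for all u ≠ 0, g ∈ H, and f* ∈ H with A f* = −g. Let F ⊆ H be closed under scalar multiplication (f ∈ F implies a·f ∈ F for all real a), and let f^w ∈ F minimize Q(f) := ⟨f, g⟩ + (1/2)⟨f, A f⟩ over F. Assume f* ≠ 0 and f^w ≠ 0, and define the A-induced cosine angle Θ := ⟨f*, f^w⟩_A / (‖f*‖_A ‖f^w‖_A). Then: (1) ‖f* − f^w‖_A² = (1 − Θ²) ‖f*‖_A²; (2) ‖f^w‖_A = Θ ‖f*‖_A; (3) ‖f^w‖_A² = −⟨g, f^w⟩. -/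
/-!
The family contains the whole line through `f^w`, so `t ↦ Q(t • f^w)` is stationary at `t = 1`,
i.e. `⟨f^w, g⟩ + ‖f^w‖_A² = 0`. Since `g = -A f*`, this says that `f* - f^w` is `A`-orthogonal
to `f^w`: hence `⟨f*, f^w⟩_A = ‖f^w‖_A²` and, by Pythagoras for `⟨·,·⟩_A`,
`‖f*‖_A² = ‖f^w‖_A² + ‖f* - f^w‖_A²`. The three identities are rearrangements of these two.
-/

open scoped RealInnerProductSpace

section

variable {H : Type*} [NormedAddCommGroup H] [InnerProductSpace ℝ H]

noncomputable def quadraticModel (A : H →L[ℝ] H) (g f : H) : ℝ :=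
  ⟪f, g⟫ + (1 / 2) * ⟪f, A f⟫

theorem quadraticModel_smul (A : H →L[ℝ] H) (g f : H) (t : ℝ) :
    quadraticModel A g (t • f) = t * ⟪f, g⟫ + t ^ 2 / 2 * ⟪f, A f⟫ := by
  simp only [quadraticModel, map_smul, real_inner_smul_left, real_inner_smul_right]
  ring

theorem inner_add_inner_apply_eq_zero_of_forall_le_smul {A : H →L[ℝ] H} {g f : H}
    (hmin : ∀ t : ℝ, quadraticModel A g f ≤ quadraticModel A g (t • f)) :
    ⟪f, g⟫ + ⟪f, A f⟫ = 0 := by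
  have hlocal : IsLocalMin (fun t : ℝ => quadraticModel A g (t • f)) 1 :=
    Filter.Eventually.of_forall fun t => by simpa only [one_smul] using hmin t
  have hderiv : HasDerivAt (fun t : ℝ => quadraticModel A g (t • f)) (⟪f, g⟫ + ⟪f, A f⟫) 1 := by
    rw [funext (quadraticModel_smul A g f)]
    have hpoly := ((hasDerivAt_id' (1 : ℝ)).mul_const ⟪f, g⟫).add
      (((hasDerivAt_pow 2 (1 : ℝ)).div_const 2).mul_const ⟪f, A f⟫)
    norm_num at hpoly
    exact hpoly
  exact hlocal.hasDerivAt_eq_zero hderiv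

theorem inner_sub_apply_eq_zero_of_apply_eq_neg {A : H →L[ℝ] H}
    (hA : (A : H →ₗ[ℝ] H).IsSymmetric) {g fstar f : H} (hfstar : A fstar = -g)
    (hf : ⟪f, g⟫ + ⟪f, A f⟫ = 0) : ⟪fstar - f, A f⟫ = 0 := by
  have hcross : ⟪fstar, A f⟫ = -⟪f, g⟫ := by
    rw [← ContinuousLinearMap.coe_coe A, ← hA, ContinuousLinearMap.coe_coe, hfstar,
      inner_neg_left, real_inner_comm]
  rw [inner_sub_left, hcross]
  linarith

theorem inner_apply_self_eq_add_of_inner_sub_apply_eq_zero {A : H →L[ℝ] H}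
    (hA : (A : H →ₗ[ℝ] H).IsSymmetric) {x y : H} (hxy : ⟪x - y, A y⟫ = 0) :
    ⟪x, A x⟫ = ⟪y, A y⟫ + ⟪x - y, A (x - y)⟫ := by
  have hsymm : ⟪A x, y⟫ = ⟪x, A y⟫ := hA x y
  rw [real_inner_comm] at hsymm
  simp only [map_sub, inner_sub_left, inner_sub_right] at hxy ⊢
  linarith

theorem eq_sq_div_mul_mul_of_le {a b : ℝ} (hb : 0 ≤ b) (hba : b ≤ a) :
    b = b ^ 2 / (a * b) * a := by
  rcases hb.eq_or_lt with rfl | hb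
  · simp
  · have ha : a ≠ 0 := (hb.trans_le hba).ne'
    field_simp

end

theorem stmt1_general {H : Type*} [NormedAddCommGroup H] [InnerProductSpace ℝ H]
    (A : H →L[ℝ] H)
    (hsa : ∀ u v : H, ⟪A u, v⟫ = ⟪u, A v⟫)
    (hpos : ∀ u : H, u ≠ 0 → 0 < ⟪u, A u⟫)
    (g fstar : H) (hfstar : A fstar = -g)
    (Fam : Set H) (hscale : ∀ f ∈ Fam, ∀ a : ℝ, a • f ∈ Fam)
    (fw : H) (hmem : fw ∈ Fam)
    (hmin : ∀ f ∈ Fam,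
      ⟪fw, g⟫ + (1 / 2) * ⟪fw, A fw⟫ ≤ ⟪f, g⟫ + (1 / 2) * ⟪f, A f⟫) :
    let nA : H → ℝ := fun u => Real.sqrt ⟪u, A u⟫
    let Θ : ℝ := ⟪fstar, A fw⟫ / (nA fstar * nA fw)
    nA (fstar - fw) ^ 2 = (1 - Θ ^ 2) * nA fstar ^ 2 ∧
    nA fw = Θ * nA fstar ∧
    nA fw ^ 2 = -⟪g, fw⟫ := by
  intro nA Θ
  have hnonneg (u : H) : 0 ≤ ⟪u, A u⟫ := by
    rcases eq_or_ne u 0 with rfl | hu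
    · simp
    · exact (hpos u hu).le
  have hsq (u : H) : nA u ^ 2 = ⟪u, A u⟫ := Real.sq_sqrt (hnonneg u)
  have hstat := inner_add_inner_apply_eq_zero_of_forall_le_smul
    fun t => hmin _ (hscale fw hmem t)
  have horth := inner_sub_apply_eq_zero_of_apply_eq_neg hsa hfstar hstat
  have hpyth := inner_apply_self_eq_add_of_inner_sub_apply_eq_zero hsa horth
  have hcross : ⟪fstar, A fw⟫ = nA fw ^ 2 := by
    rw [hsq]
    linarith [inner_sub_left (𝕜 := ℝ) fstar fw (A fw)]
  have hle : nA fw ≤ nA fstar := Real.sqrt_le_sqrt (by linarith [hnonneg (fstar - fw)])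
  have hcos : nA fw = Θ * nA fstar := by
    rw [show Θ = nA fw ^ 2 / (nA fstar * nA fw) from congrArg (· / _) hcross]
    exact eq_sq_div_mul_mul_of_le (Real.sqrt_nonneg _) hle
  refine ⟨?_, hcos, ?_⟩
  · rw [sub_mul, one_mul, ← mul_pow, ← hcos, hsq, hsq, hsq]
    linarith
  · rw [hsq, real_inner_comm fw g]
    linarith

/-- Properties of the `A`-induced cosine angle `Θ` between the exact Newton
direction `f*` (with `A f* = -g`) and a minimizer `f^w` of the quadratic model
`Q(f) = ⟨f,g⟩ + ½⟨f,Af⟩` over a family `Fam` closed under scalar multiplication: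
`‖f* − f^w‖_A² = (1 − Θ²)‖f*‖_A²`, `‖f^w‖_A = Θ‖f*‖_A`, and `‖f^w‖_A² = −⟨g, f^w⟩`. -/
theorem stmt1 {H : Type*} [NormedAddCommGroup H] [InnerProductSpace ℝ H] [CompleteSpace H]
    (A : H →L[ℝ] H)
    (hsa : ∀ u v : H, ⟪A u, v⟫ = ⟪u, A v⟫)
    (hpos : ∀ u : H, u ≠ 0 → 0 < ⟪u, A u⟫)
    (g fstar : H) (hfstar : A fstar = -g)
    (Fam : Set H) (hscale : ∀ f ∈ Fam, ∀ a : ℝ, a • f ∈ Fam)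
    (fw : H) (hmem : fw ∈ Fam)
    (hmin : ∀ f ∈ Fam,
      ⟪fw, g⟫ + (1 / 2) * ⟪fw, A fw⟫ ≤ ⟪f, g⟫ + (1 / 2) * ⟪f, A f⟫)
    (hfstar0 : fstar ≠ 0) (hfw0 : fw ≠ 0) :
    let nA : H → ℝ := fun u => Real.sqrt ⟪u, A u⟫
    let Θ : ℝ := ⟪fstar, A fw⟫ / (nA fstar * nA fw)
    nA (fstar - fw) ^ 2 = (1 - Θ ^ 2) * nA fstar ^ 2 ∧
    nA fw = Θ * nA fstar ∧
    nA fw ^ 2 = -⟪g, fw⟫ :=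
  stmt1_general A hsa hpos g fstar hfstar Fam hscale fw hmem hmin
end

section
/- Let H be a real Hilbert space and L : H → ℝ twice Fréchet differentiable, S-smooth (its gradient is S-Lipschitz) and μ-strongly convex with 0 < μ ≤ S, and let F ⊆ H be closed under scalar multiplication. Fix a learning rate η ∈ (0, 2μ/S). Consider iterates F_{k+1} = F_k + η f^w_{k+1}, where g_k = ∇L(F_k), H_k = ∇²L(F_k), f_{k+1} is the exact Newton direction satisfying H_k f_{k+1} = −g_k, and f^w_{k+1} minimizes Q_k(f) := ⟨f, g_k⟩ + (1/2)⟨f, H_k f⟩ over F. Let Θ ∈ [0,1] be a lower bound on the Hessian-induced cosine angles Θ_k := ⟨f_{k+1}, f^w_{k+1}⟩_{H_k} / (‖f_{k+1}‖_{H_k} ‖f^w_{k+1}‖_{H_k}). Then for every k: L(F_k) − L(F_{k+1}) ≥ η(1 − ηS/(2μ)) Θ² ‖f_{k+1}‖²_{H_k}. Moreover, if L is Hessian-dominated with constant c > 0 (i.e. ‖f_{k+1}‖²_{H_k} ≥ c L(F_k) for all k), then L(F_{k+1}) ≤ (1 − ρ) L(F_k) for all k, where ρ = c Θ² η (1 −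 ηS/(2μ)). -/
open scoped RealInnerProductSpace

/-!
Each step is a damped Newton step in the direction of the weak learner `w`.  Because the family
is a cone, `w` minimizes the quadratic model along its own ray, which forces
`⟪w, ∇L⟫ = -‖w‖²_H`.  The descent lemma for the `S`-Lipschitz gradient together with
`μ‖w‖² ≤ ‖w‖²_H` (strong convexity) then gives a decrease of at least
`η (1 - η S / (2μ)) ‖w‖²_H`.  By symmetry of the Hessian and the Newton equation,
`⟪f, w⟫_H = ‖w‖²_H`, so the cosine bound reads `Θ ‖f‖_H ≤ ‖w‖_H`, which turns the decrease into
the claimed one; Hessian domination then makes it a linear rate.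
-/

-- `t = 1` minimizes `t ↦ t c + t² b / 2`; the discriminant replaces the first-order condition.
theorem eq_neg_of_forall_le_quadratic {c b : ℝ}
    (h : ∀ t : ℝ, c + 1 / 2 * b ≤ t * c + 1 / 2 * (t ^ 2 * b)) : c = -b := by
  have hdisc : discrim (b / 2) (c + b) 0 ≤ 0 :=
    discrim_le_zero fun s => by nlinarith [h (1 + s)]
  rw [discrim] at hdisc
  nlinarith [sq_nonneg (c + b)]

theorem inner_eq_neg_of_forall_le_smul {E : Type*} [NormedAddCommGroup E]
    [InnerProductSpace ℝ E] {g w : E} {A : E →L[ℝ] E}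
    (h : ∀ t : ℝ, ⟪w, g⟫ + 1 / 2 * ⟪w, A w⟫ ≤ ⟪t • w, g⟫ + 1 / 2 * ⟪t • w, A (t • w)⟫) :
    ⟪w, g⟫ = -⟪w, A w⟫ := by
  refine eq_neg_of_forall_le_quadratic fun t => ?_
  simpa [real_inner_smul_left, real_inner_smul_right, ← mul_assoc, sq] using h t

theorem sq_mul_le_of_le_div_sqrt_mul_sqrt {Θ a b : ℝ} (hΘ : 0 ≤ Θ) (ha : 0 ≤ a) (hb : 0 ≤ b)
    (h : Θ ≤ b / (√a * √b)) : Θ ^ 2 * a ≤ b := by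
  rcases ha.eq_or_lt with rfl | ha'
  · simpa using hb
  rcases hb.eq_or_lt with rfl | hb'
  · simp only [Real.sqrt_zero, mul_zero, div_zero] at h
    simp [le_antisymm h hΘ]
  have hcos : Θ ≤ √b / √a := by
    rwa [← mul_div_mul_right (√b) (√a) (Real.sqrt_pos.2 hb').ne', Real.mul_self_sqrt hb]
  calc Θ ^ 2 * a ≤ (√b / √a) ^ 2 * a := by gcongr
    _ = b := by rw [div_pow, Real.sq_sqrt hb, Real.sq_sqrt ha, div_mul_cancel₀ _ ha'.ne']

section NewtonStep

variable {E : Type*} [NormedAddCommGroup E] [InnerProductSpace ℝ E]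
  {L : E → ℝ} {grad : E → E} {hess : E → E →L[ℝ] E} {S μ : ℝ}

theorem hasDerivAt_add_smul (x d : E) (t : ℝ) : HasDerivAt (fun s : ℝ => x + s • d) d t := by
  simpa using ((hasDerivAt_id t).smul_const d).const_add x

theorem le_add_inner_add_of_lipschitz_grad [CompleteSpace E]
    (hgrad : ∀ x, HasGradientAt L (grad x) x) (hsmooth : ∀ x y, ‖grad x - grad y‖ ≤ S * ‖x - y‖) (x d : E) :
    L (x + d) ≤ L x + ⟪grad x, d⟫ + S / 2 * ‖d‖ ^ 2 := by
  set φ : ℝ → ℝ := fun t => t * ⟪grad x, d⟫ + S / 2 * t ^ 2 * ‖d‖ ^ 2 - L (x + t • d)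
  have hφ : ∀ t, HasDerivAt φ (⟪grad x, d⟫ + S * t * ‖d‖ ^ 2 - ⟪grad (x + t • d), d⟫) t := by
    intro t
    have hL : HasDerivAt (fun s : ℝ => L (x + s • d)) ⟪grad (x + t • d), d⟫ t := by
      exact (hgrad (x + t • d)).hasFDerivAt.comp_hasDerivAt t (hasDerivAt_add_smul x d t)
    refine ((((hasDerivAt_id t).mul_const ⟪grad x, d⟫).add
      (((hasDerivAt_pow 2 t).const_mul (S / 2)).mul_const (‖d‖ ^ 2))).sub hL).congr_deriv ?_
    simp only [Nat.add_one_sub_one, pow_one, Nat.cast_ofNat]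
    ring
  have hmono : MonotoneOn φ (Set.Ici 0) := by
    refine monotoneOn_of_hasDerivWithinAt_nonneg (convex_Ici 0)
      (fun t _ => (hφ t).continuousAt.continuousWithinAt) (fun t _ => (hφ t).hasDerivWithinAt) ?_
    intro t ht
    rw [interior_Ici] at ht
    have hlip : ⟪grad (x + t • d) - grad x, d⟫ ≤ S * t * ‖d‖ ^ 2 :=
      calc ⟪grad (x + t • d) - grad x, d⟫ ≤ ‖grad (x + t • d) - grad x‖ * ‖d‖ :=
            real_inner_le_norm _ _
        _ ≤ S * ‖t • d‖ * ‖d‖ := by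
            gcongr
            simpa using hsmooth (x + t • d) x
        _ = S * t * ‖d‖ ^ 2 := by
            rw [norm_smul, Real.norm_of_nonneg (le_of_lt ht)]
            ring
    rw [inner_sub_left] at hlip
    linarith
  have h01 := hmono Set.self_mem_Ici (Set.mem_Ici.2 zero_le_one) zero_le_one
  simp only [φ] at h01
  norm_num at h01
  linarith

theorem mul_norm_sq_le_inner_grad_sub_grad
    (hstrong : ∀ x y, L y ≥ L x + ⟪grad x, y - x⟫ + μ / 2 * ‖y - x‖ ^ 2) (y z : E) :
    μ * ‖y - z‖ ^ 2 ≤ ⟪grad y - grad z, y - z⟫ := by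
  have hyz := hstrong z y
  have hzy := hstrong y z
  rw [norm_sub_rev z y, ← neg_sub y z, inner_neg_right] at hzy
  rw [inner_sub_left]
  linarith

theorem mul_norm_sq_le_inner_hess (hhess : ∀ x, HasFDerivAt grad (hess x) x)
    (hmono : ∀ y z, μ * ‖y - z‖ ^ 2 ≤ ⟪grad y - grad z, y - z⟫) (x u : E) :
    μ * ‖u‖ ^ 2 ≤ ⟪u, hess x u⟫ := by
  set ψ : ℝ → ℝ := fun t => ⟪grad (x + t • u), u⟫ - μ * t * ‖u‖ ^ 2
  have hψ : HasDerivAt ψ (⟪hess x u, u⟫ - μ * ‖u‖ ^ 2) 0 := by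
    have hg : HasDerivAt (fun t : ℝ => grad (x + t • u)) (hess x u) 0 := by
      have := (hhess (x + (0 : ℝ) • u)).comp_hasDerivAt 0 (hasDerivAt_add_smul x u 0)
      simpa [Function.comp_def] using this
    refine ((hg.inner ℝ (hasDerivAt_const 0 u)).sub
      (((hasDerivAt_id 0).const_mul μ).mul_const (‖u‖ ^ 2))).congr_deriv ?_
    simp
  have hψ_mono : Monotone ψ := by
    intro s t hst
    rcases hst.eq_or_lt with rfl | hst
    · rfl
    have h := hmono (x + t • u) (x + s • u)
    rw [add_sub_add_left_eq_sub, ← sub_smul, inner_smul_right, norm_smul, Real.norm_of_nonneg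
      (sub_nonneg.2 hst.le), mul_pow, inner_sub_left] at h
    have : 0 ≤ (t - s) * (ψ t - ψ s) := by simp only [ψ]; nlinarith
    simpa using nonneg_of_mul_nonneg_right this (sub_pos.2 hst)
  have := hψ_mono.deriv_nonneg (x := 0)
  rw [hψ.deriv, real_inner_comm] at this
  linarith

theorem inner_hess_comm [CompleteSpace E] (hgrad : ∀ x, HasGradientAt L (grad x) x)
    (hhess : ∀ x, HasFDerivAt grad (hess x) x) (x u v : E) :
    ⟪u, hess x v⟫ = ⟪v, hess x u⟫ := by
  have hL : ∀ y, HasFDerivAt L (innerSL ℝ (grad y)) y := fun y => (hgrad y).hasFDerivAt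
  have h := second_derivative_symmetric hL ((innerSL ℝ).hasFDerivAt.comp x (hhess x)) u v
  rw [real_inner_comm (hess x v), real_inner_comm (hess x u)]
  exact h.symm

theorem newton_step_decrease [CompleteSpace E] {η Θ : ℝ} (hgrad : ∀ x, HasGradientAt L (grad x) x) (hhess : ∀ x, HasFDerivAt grad (hess x) x)
    (hsmooth : ∀ x y, ‖grad x - grad y‖ ≤ S * ‖x - y‖)
    (hstrong : ∀ x y, L y ≥ L x + ⟪grad x, y - x⟫ + μ / 2 * ‖y - x‖ ^ 2)
    (hμ : 0 < μ) (hS : 0 ≤ S) (hη : 0 < η) (hηS : η * S ≤ 2 * μ) (hΘ : 0 ≤ Θ) {x f w : E}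
    (hnewton : hess x f = -grad x)
    (hray : ∀ t : ℝ, ⟪w, grad x⟫ + 1 / 2 * ⟪w, hess x w⟫
      ≤ ⟪t • w, grad x⟫ + 1 / 2 * ⟪t • w, hess x (t • w)⟫)
    (hcos : Θ ≤ ⟪f, hess x w⟫ / (√⟪f, hess x f⟫ * √⟪w, hess x w⟫)) :
    η * (1 - η * S / (2 * μ)) * Θ ^ 2 * ⟪f, hess x f⟫ ≤ L x - L (x + η • w) := by
  have hcoercive := mul_norm_sq_le_inner_hess hhess (mul_norm_sq_le_inner_grad_sub_grad hstrong) x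
  have hw := hcoercive w
  have hopt : ⟪w, grad x⟫ = -⟪w, hess x w⟫ := inner_eq_neg_of_forall_le_smul hray
  have hfw : ⟪f, hess x w⟫ = ⟪w, hess x w⟫ := by
    rw [inner_hess_comm hgrad hhess, hnewton, inner_neg_right, hopt, neg_neg]
  have hΘw : Θ ^ 2 * ⟪f, hess x f⟫ ≤ ⟪w, hess x w⟫ :=
    sq_mul_le_of_le_div_sqrt_mul_sqrt hΘ ((hcoercive f).trans' (by positivity))
      (hw.trans' (by positivity)) (hfw ▸ hcos)
  have hdesc := le_add_inner_add_of_lipschitz_grad hgrad hsmooth x (η • w)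
  rw [real_inner_smul_right, real_inner_comm, hopt, norm_smul, Real.norm_of_nonneg hη.le]
    at hdesc
  have hrate : 0 ≤ 1 - η * S / (2 * μ) := by
    rw [sub_nonneg, div_le_one (by positivity)]
    exact hηS
  calc η * (1 - η * S / (2 * μ)) * Θ ^ 2 * ⟪f, hess x f⟫
      ≤ η * (1 - η * S / (2 * μ)) * ⟪w, hess x w⟫ := by
        rw [mul_assoc]
        gcongr
    _ = η * ⟪w, hess x w⟫ - S / 2 * η ^ 2 * (⟪w, hess x w⟫ / μ) := by
        field_simp
    _ ≤ η * ⟪w, hess x w⟫ - S / 2 * η ^ 2 * ‖w‖ ^ 2 := by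
        gcongr
        rw [le_div_iff₀ hμ, mul_comm]
        exact hw
    _ ≤ L x - L (x + η • w) := by linarith

end NewtonStep

theorem stmt2_general {H : Type*} [NormedAddCommGroup H] [InnerProductSpace ℝ H] [CompleteSpace H]
    (L : H → ℝ) (grad : H → H) (hess : H → H →L[ℝ] H)
    (hgrad : ∀ x, HasGradientAt L (grad x) x)
    (hhess : ∀ x, HasFDerivAt grad (hess x) x)
    (S μ : ℝ) (hμ : 0 < μ)
    (hsmooth : ∀ x y : H, ‖grad x - grad y‖ ≤ S * ‖x - y‖)
    (hstrong : ∀ x y : H, L y ≥ L x + ⟪grad x, y - x⟫ + (μ / 2) * ‖y - x‖ ^ 2)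
    (Fam : Set H) (hscale : ∀ f ∈ Fam, ∀ a : ℝ, a • f ∈ Fam)
    (η : ℝ) (hη0 : 0 < η) (hη1 : η < 2 * μ / S)
    (F f fw : ℕ → H)
    (hnewton : ∀ k, hess (F k) (f k) = -(grad (F k)))
    (hmem : ∀ k, fw k ∈ Fam)
    (hmin : ∀ k, ∀ q ∈ Fam,
      ⟪fw k, grad (F k)⟫ + (1 / 2) * ⟪fw k, hess (F k) (fw k)⟫
        ≤ ⟪q, grad (F k)⟫ + (1 / 2) * ⟪q, hess (F k) q⟫)
    (hiter : ∀ k, F (k + 1) = F k + η • fw k)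
    (Θ : ℝ) (hΘ0 : 0 ≤ Θ)
    (hΘ : ∀ k, Θ ≤ ⟪f k, hess (F k) (fw k)⟫ /
      (Real.sqrt ⟪f k, hess (F k) (f k)⟫ * Real.sqrt ⟪fw k, hess (F k) (fw k)⟫)) :
    (∀ k, L (F k) - L (F (k + 1))
        ≥ η * (1 - η * S / (2 * μ)) * Θ ^ 2 * ⟪f k, hess (F k) (f k)⟫) ∧
    (∀ c : ℝ, 0 < c → (∀ k, ⟪f k, hess (F k) (f k)⟫ ≥ c * L (F k)) →
      ∀ k, L (F (k + 1)) ≤ (1 - c * Θ ^ 2 * η * (1 - η * S / (2 * μ))) * L (F k)) := by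
  have hS : 0 < S := by
    by_contra! hS
    exact (hη0.trans hη1).not_ge (div_nonpos_of_nonneg_of_nonpos (by positivity) hS)
  have hηS : η * S < 2 * μ := (lt_div_iff₀ hS).1 hη1
  have hstep : ∀ k, L (F k) - L (F (k + 1))
      ≥ η * (1 - η * S / (2 * μ)) * Θ ^ 2 * ⟪f k, hess (F k) (f k)⟫ := fun k => by
    rw [hiter k]
    exact newton_step_decrease hgrad hhess hsmooth hstrong hμ hS.le hη0 hηS.le hΘ0 (hnewton k)
      (fun t => hmin k _ (hscale _ (hmem k) t)) (hΘ k)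
  refine ⟨hstep, fun c _ hdom k => ?_⟩
  have hρ : 0 ≤ η * (1 - η * S / (2 * μ)) * Θ ^ 2 := by
    have : η * S / (2 * μ) < 1 := (div_lt_one (by positivity)).2 hηS
    have : 0 < 1 - η * S / (2 * μ) := by linarith
    positivity
  nlinarith [hstep k, mul_le_mul_of_nonneg_left (hdom k) hρ]

/-- **Global Rate I.** For an `S`-smooth, `μ`-strongly convex twice Fréchet
differentiable loss `L` on a real Hilbert space, vanilla restricted Newton descent with
learning rate `η ∈ (0, 2μ/S)`, weak learners from a scalable family, and Hessian-induced
cosine angle bounded below by `Θ`, guarantees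
`L(F_k) − L(F_{k+1}) ≥ η(1 − ηS/(2μ)) Θ² ‖f_{k+1}‖²_{H_k}`; if moreover `L` is
Hessian-dominated with constant `c > 0`, then `L(F_{k+1}) ≤ (1 − ρ) L(F_k)` with
`ρ = c Θ² η (1 − ηS/(2μ))`. -/
theorem stmt2 {H : Type*} [NormedAddCommGroup H] [InnerProductSpace ℝ H] [CompleteSpace H]
    (L : H → ℝ) (grad : H → H) (hess : H → H →L[ℝ] H)
    (hgrad : ∀ x, HasGradientAt L (grad x) x)
    (hhess : ∀ x, HasFDerivAt grad (hess x) x)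
    (S μ : ℝ) (hμ : 0 < μ) (hμS : μ ≤ S)
    (hsmooth : ∀ x y : H, ‖grad x - grad y‖ ≤ S * ‖x - y‖)
    (hstrong : ∀ x y : H, L y ≥ L x + ⟪grad x, y - x⟫ + (μ / 2) * ‖y - x‖ ^ 2)
    (Fam : Set H) (hscale : ∀ f ∈ Fam, ∀ a : ℝ, a • f ∈ Fam)
    (η : ℝ) (hη0 : 0 < η) (hη1 : η < 2 * μ / S)
    (F f fw : ℕ → H)
    (hnewton : ∀ k, hess (F k) (f k) = -(grad (F k)))
    (hmem : ∀ k, fw k ∈ Fam)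
    (hmin : ∀ k, ∀ q ∈ Fam,
      ⟪fw k, grad (F k)⟫ + (1 / 2) * ⟪fw k, hess (F k) (fw k)⟫
        ≤ ⟪q, grad (F k)⟫ + (1 / 2) * ⟪q, hess (F k) q⟫)
    (hiter : ∀ k, F (k + 1) = F k + η • fw k)
    (Θ : ℝ) (hΘ0 : 0 ≤ Θ) (hΘ1 : Θ ≤ 1)
    (hΘ : ∀ k, Θ ≤ ⟪f k, hess (F k) (fw k)⟫ /
      (Real.sqrt ⟪f k, hess (F k) (f k)⟫ * Real.sqrt ⟪fw k, hess (F k) (fw k)⟫)) :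
    (∀ k, L (F k) - L (F (k + 1))
        ≥ η * (1 - η * S / (2 * μ)) * Θ ^ 2 * ⟪f k, hess (F k) (f k)⟫) ∧
    (∀ c : ℝ, 0 < c → (∀ k, ⟪f k, hess (F k) (f k)⟫ ≥ c * L (F k)) →
      ∀ k, L (F (k + 1)) ≤ (1 - c * Θ ^ 2 * η * (1 - η * S / (2 * μ))) * L (F k)) :=
  stmt2_general L grad hess hgrad hhess S μ hμ hsmooth hstrong Fam hscale η hη0 hη1 F f fw hnewton
    hmem hmin hiter Θ hΘ0 hΘ
end

section
/- Let H be a real Hilbert space and L : H → ℝ twice Fréchet differentiable, μ-strongly convex (μ > 0) with 2M-Lipschitz Fréchet Hessian (M > 0). Let F ⊆ H be closed under scalar multiplication, fix η ∈ (0, 1], C ≥ 1 and γ ∈ (0, 1], and consider gradient-regularized Newton iterates: g_k = ∇L(F_k), H_k = ∇²L(F_k), λ_k = C √(M‖g_k‖), f^w_{k+1} minimizes Q_k^reg(f) := ⟨f, g_k⟩ + (1/2)⟨f, H_k f⟩ + (λ_k/2)‖f‖² over F, F_{k+1} = F_k + η f^w_{k+1}, and the implied weak gradients g^w_k := −(H_k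 + λ_k I) f^w_{k+1} satisfy ‖g^w_k − g_k‖² ≤ (1 − γ²)‖g_k‖² for all k. Suppose there exists k_0 ≥ 0 with ‖g_{k_0}‖ ≤ (μ²/(4C²M)) · ((1 − √(1 − γ²))/(1 + √(1 − γ²)))². Then for all k ≥ k_0, ‖g_{k+1}‖ ≤ ((3 + ρ)/4) ‖g_k‖, where ρ = 1 − η(1 − √(1 − γ²)) < 1; in particular the gradient norms converge to zero at a linear rate. -/
/-!
Write `s = √(1 - γ²)`, `g = ∇L(F_k)`, `f = f^w_{k+1}` and `w = g^w_k`. The next gradient splits as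
`g_{k+1} = (g - η w) - η λ_k f + R`, where `R` is the Taylor remainder of `∇L` along the step,
of size at most `M η² ‖f‖²` because the Hessian is `2M`-Lipschitz. The edge condition bounds the
first term by `ρ ‖g‖`. Strong convexity makes every Hessian `μ`-coercive, so
`μ ‖f‖ ≤ ‖w‖ ≤ (1 + s) ‖g‖`; below the threshold on `‖g‖` the regularization satisfies
`λ_k (1 + s) ≤ μ (1 - s) / 2`, and the last two terms cost at most `(3/4) η (1 - s) ‖g‖`.
Hence `‖g_{k+1}‖ ≤ (1 - η (1 - s) / 4) ‖g‖`, the threshold is preserved, and the contraction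
iterates.
-/

open scoped RealInnerProductSpace
open Set Filter Topology

theorem norm_sub_sub_fderiv_le_of_lipschitz {E F : Type*} [NormedAddCommGroup E]
    [NormedSpace ℝ E] [NormedAddCommGroup F] [NormedSpace ℝ F] {f : E → F}
    {f' : E → E →L[ℝ] F} {K : ℝ} (hf : ∀ x, HasFDerivAt f (f' x) x)
    (hf' : ∀ x y, ‖f' x - f' y‖ ≤ K * ‖x - y‖) (x y : E) :
    ‖f y - f x - f' x (y - x)‖ ≤ K / 2 * ‖y - x‖ ^ 2 := by
  set v := y - x
  let φ : ℝ → F := fun t => f (x + t • v) - f x - t • f' x v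
  have hφ : ∀ t, HasDerivAt φ (f' (x + t • v) v - f' x v) t := by
    intro t
    have hline : HasDerivAt (fun t : ℝ => x + t • v) v t := by
      simpa using ((hasDerivAt_id t).smul_const v).const_add x
    have h := (((hf _).comp_hasDerivAt t hline).sub_const (f x)).sub
      ((hasDerivAt_id t).smul_const (f' x v))
    rwa [one_smul] at h
  have hφ' : ∀ t ∈ Ico (0 : ℝ) 1, ‖f' (x + t • v) v - f' x v‖ ≤ K * ‖v‖ ^ 2 * t := by
    rintro t ⟨ht0, -⟩
    calc ‖f' (x + t • v) v - f' x v‖ = ‖(f' (x + t • v) - f' x) v‖ := rfl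
      _ ≤ ‖f' (x + t • v) - f' x‖ * ‖v‖ := ContinuousLinearMap.le_opNorm _ _
      _ ≤ K * ‖x + t • v - x‖ * ‖v‖ := by gcongr; exact hf' _ _
      _ = K * ‖v‖ ^ 2 * t := by
        rw [add_sub_cancel_left, norm_smul, Real.norm_of_nonneg ht0]; ring
  have hB : ∀ t, HasDerivAt (fun t => K / 2 * ‖v‖ ^ 2 * t ^ 2) (K * ‖v‖ ^ 2 * t) t := by
    intro t
    exact ((hasDerivAt_pow 2 t).const_mul _).congr_deriv (by push_cast; ring)
  have := image_norm_le_of_norm_deriv_right_le_deriv_boundary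
    (fun t _ => (hφ t).continuousAt.continuousWithinAt) (fun t _ => (hφ t).hasDerivWithinAt)
    (by simp [φ]) hB hφ' (right_mem_Icc.2 zero_le_one)
  simpa [φ, v] using this

theorem norm_sub_smul_le_of_norm_sub_le {E : Type*} [SeminormedAddCommGroup E]
    [NormedSpace ℝ E] {g w : E} {s η : ℝ} (hw : ‖w - g‖ ≤ s * ‖g‖) (hη0 : 0 ≤ η)
    (hη1 : η ≤ 1) : ‖g - η • w‖ ≤ (1 - η * (1 - s)) * ‖g‖ :=
  calc ‖g - η • w‖ = ‖(1 - η) • g - η • (w - g)‖ := by congr 1; module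
    _ ≤ ‖(1 - η) • g‖ + ‖η • (w - g)‖ := norm_sub_le _ _
    _ = (1 - η) * ‖g‖ + η * ‖w - g‖ := by
      rw [norm_smul, norm_smul, Real.norm_of_nonneg (sub_nonneg.2 hη1),
        Real.norm_of_nonneg hη0]
    _ ≤ (1 - η) * ‖g‖ + η * (s * ‖g‖) := by gcongr
    _ = (1 - η * (1 - s)) * ‖g‖ := by ring

theorem norm_le_of_regularized_newton_step {E : Type*} [SeminormedAddCommGroup E]
    [NormedSpace ℝ E] {A : E →L[ℝ] E} {g g' f : E} {M η s lam : ℝ} (hη0 : 0 ≤ η)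
    (hη1 : η ≤ 1) (hlam : 0 ≤ lam) (hedge : ‖-(A f + lam • f) - g‖ ≤ s * ‖g‖)
    (htaylor : ‖g' - g - A (η • f)‖ ≤ M * ‖η • f‖ ^ 2) :
    ‖g'‖ ≤ (1 - η * (1 - s)) * ‖g‖ + η * (lam * ‖f‖) + η ^ 2 * (M * ‖f‖ ^ 2) :=
  calc ‖g'‖ = ‖(g - η • -(A f + lam • f)) - (η * lam) • f + (g' - g - A (η • f))‖ := by
        congr 1; rw [map_smul]; module
    _ ≤ ‖g - η • -(A f + lam • f)‖ + ‖(η * lam) • f‖ + ‖g' - g - A (η • f)‖ :=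
        norm_add_le_of_le (norm_sub_le _ _) le_rfl
    _ ≤ (1 - η * (1 - s)) * ‖g‖ + η * (lam * ‖f‖) + η ^ 2 * (M * ‖f‖ ^ 2) := by
        gcongr ?_ + ?_ + ?_
        · exact norm_sub_smul_le_of_norm_sub_le hedge hη0 hη1
        · rw [norm_smul, Real.norm_of_nonneg (mul_nonneg hη0 hlam), mul_assoc]
        · rw [norm_smul, Real.norm_of_nonneg hη0] at htaylor
          exact htaylor.trans_eq (by ring)

section InnerProduct

variable {H : Type*} [NormedAddCommGroup H] [InnerProductSpace ℝ H]

theorem mul_norm_sq_le_inner_sub_of_strongConvex {L : H → ℝ} {grad : H → H} {μ : ℝ}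
    (hL : ∀ x y : H, L y ≥ L x + ⟪grad x, y - x⟫ + (μ / 2) * ‖y - x‖ ^ 2) (x y : H) :
    μ * ‖y - x‖ ^ 2 ≤ ⟪grad y - grad x, y - x⟫ := by
  have hxy := hL x y
  have hyx := hL y x
  rw [← neg_sub y x, inner_neg_right, norm_neg] at hyx
  rw [inner_sub_left]
  linarith

theorem mul_norm_sq_le_inner_apply_of_hasFDerivAt {grad : H → H} {A : H →L[ℝ] H} {μ : ℝ}
    {x : H} (hmono : ∀ y, μ * ‖y - x‖ ^ 2 ≤ ⟪grad y - grad x, y - x⟫)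
    (hA : HasFDerivAt grad A x) (v : H) :
    μ * ‖v‖ ^ 2 ≤ ⟪v, A v⟫ := by
  have hslope : Tendsto (fun t : ℝ => ⟪t⁻¹ • (grad (x + t • v) - grad x), v⟫) (𝓝[>] 0)
      (𝓝 ⟪A v, v⟫) :=
    (hA.hasLineDerivAt v).tendsto_slope_zero_right.inner tendsto_const_nhds
  rw [real_inner_comm]
  refine ge_of_tendsto hslope (eventually_nhdsWithin_of_forall fun t (ht : 0 < t) => ?_)
  have hxt := hmono (x + t • v)
  rw [add_sub_cancel_left, norm_smul, real_inner_smul_right, Real.norm_of_nonneg ht.le] at hxt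
  rw [real_inner_smul_left, le_inv_mul_iff₀ ht]
  nlinarith

theorem mul_norm_le_norm_apply_add_smul {A : H →L[ℝ] H} {μ lam : ℝ}
    (hA : ∀ v, μ * ‖v‖ ^ 2 ≤ ⟪v, A v⟫) (hlam : 0 ≤ lam) (f : H) :
    μ * ‖f‖ ≤ ‖A f + lam • f‖ := by
  have key : ‖f‖ * (μ * ‖f‖) ≤ ‖f‖ * ‖A f + lam • f‖ := calc
    ‖f‖ * (μ * ‖f‖) ≤ ⟪f, A f⟫ + lam * ‖f‖ ^ 2 := by nlinarith [hA f, sq_nonneg ‖f‖]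
    _ = ⟪f, A f + lam • f⟫ := by
      rw [inner_add_right, real_inner_smul_right, real_inner_self_eq_norm_sq]
    _ ≤ ‖f‖ * ‖A f + lam • f‖ := real_inner_le_norm _ _
  rcases (norm_nonneg f).eq_or_lt with h | h
  · rw [← h, mul_zero]
    exact norm_nonneg _
  · exact le_of_mul_le_mul_left key h

theorem norm_newton_step_le {A : H →L[ℝ] H} {g g' f : H} {μ M C η s : ℝ} (hμ : 0 < μ)
    (hA : ∀ v, μ * ‖v‖ ^ 2 ≤ ⟪v, A v⟫) (hM : 0 ≤ M) (hC : 1 ≤ C)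
    (hsmall : C * √(M * ‖g‖) * (1 + s) ≤ μ * (1 - s) / 2)
    (hη0 : 0 ≤ η) (hη1 : η ≤ 1) (hs0 : 0 ≤ s)
    (hedge : ‖-(A f + (C * √(M * ‖g‖)) • f) - g‖ ≤ s * ‖g‖)
    (htaylor : ‖g' - g - A (η • f)‖ ≤ M * ‖η • f‖ ^ 2) :
    ‖g'‖ ≤ (1 - η * (1 - s) / 4) * ‖g‖ := by
  set lam := C * √(M * ‖g‖) with hlam_def
  have hlam : 0 ≤ lam := by positivity
  have hMg : M * ‖g‖ ≤ lam ^ 2 := by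
    rw [hlam_def, mul_pow, Real.sq_sqrt (by positivity)]
    exact le_mul_of_one_le_left (by positivity) (one_le_pow₀ hC)
  have hs1 : s ≤ 1 := by nlinarith
  have hw : μ * ‖f‖ ≤ (1 + s) * ‖g‖ := calc
    μ * ‖f‖ ≤ ‖-(A f + lam • f)‖ := by
      rw [norm_neg]; exact mul_norm_le_norm_apply_add_smul hA hlam f
    _ ≤ ‖-(A f + lam • f) - g‖ + ‖g‖ := norm_le_norm_sub_add _ g
    _ ≤ (1 + s) * ‖g‖ := by linarith
  have hsplit := norm_le_of_regularized_newton_step hη0 hη1 hlam hedge htaylor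
  have hreg : lam * ‖f‖ ≤ (1 - s) / 2 * ‖g‖ := by
    refine le_of_mul_le_mul_left ?_ hμ
    calc μ * (lam * ‖f‖) = lam * (μ * ‖f‖) := by ring
      _ ≤ lam * ((1 + s) * ‖g‖) := by gcongr
      _ ≤ μ * (1 - s) / 2 * ‖g‖ := by nlinarith [norm_nonneg g]
      _ = μ * ((1 - s) / 2 * ‖g‖) := by ring
  have hcurv : M * ‖f‖ ^ 2 ≤ (1 - s) / 4 * ‖g‖ := by
    refine le_of_mul_le_mul_left ?_ (pow_pos hμ 2)
    calc μ ^ 2 * (M * ‖f‖ ^ 2) = M * (μ * ‖f‖) ^ 2 := by ring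
      _ ≤ M * ((1 + s) * ‖g‖) ^ 2 := by gcongr
      _ = (M * ‖g‖) * (1 + s) ^ 2 * ‖g‖ := by ring
      _ ≤ (lam * (1 + s)) ^ 2 * ‖g‖ := by rw [mul_pow]; gcongr
      _ ≤ (μ * (1 - s) / 2) ^ 2 * ‖g‖ := by gcongr
      _ ≤ μ ^ 2 * ((1 - s) / 4 * ‖g‖) := by
        nlinarith [mul_nonneg (mul_nonneg (sq_nonneg μ) (mul_nonneg hs0 (sub_nonneg.2 hs1)))
          (norm_nonneg g)]
  calc ‖g'‖ ≤ (1 - η * (1 - s)) * ‖g‖ + η * ((1 - s) / 2 * ‖g‖) + η ^ 2 * ((1 - s) / 4 * ‖g‖) :=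
        hsplit.trans (by gcongr)
    _ ≤ (1 - η * (1 - s)) * ‖g‖ + η * ((1 - s) / 2 * ‖g‖) + η * ((1 - s) / 4 * ‖g‖) := by
        gcongr
        nlinarith
    _ = (1 - η * (1 - s) / 4) * ‖g‖ := by ring

end InnerProduct

theorem mul_sqrt_mul_le_of_le {μ M C s G : ℝ} (hμ : 0 < μ) (hM : 0 < M) (hC : 0 < C)
    (hs0 : 0 ≤ s) (hs1 : s ≤ 1) (hG : G ≤ μ ^ 2 / (4 * C ^ 2 * M) * ((1 - s) / (1 + s)) ^ 2) :
    C * √(M * G) * (1 + s) ≤ μ * (1 - s) / 2 := by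
  have hMG : M * G ≤ (μ * (1 - s) / (2 * C * (1 + s))) ^ 2 := calc
    M * G ≤ M * (μ ^ 2 / (4 * C ^ 2 * M) * ((1 - s) / (1 + s)) ^ 2) := by gcongr
    _ = (μ * (1 - s) / (2 * C * (1 + s))) ^ 2 := by field_simp; ring
  have hsqrt := (Real.sqrt_le_left (by have := sub_nonneg.2 hs1; positivity)).2 hMG
  calc C * √(M * G) * (1 + s) ≤ C * (μ * (1 - s) / (2 * C * (1 + s))) * (1 + s) := by gcongr
    _ = μ * (1 - s) / 2 := by field_simp

theorem forall_le_of_step_le_mul {u : ℕ → ℝ} {q B : ℝ} {k₀ : ℕ} (hu : ∀ k, 0 ≤ u k) (hq : q ≤ 1)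
    (hstep : ∀ k, u k ≤ B → u (k + 1) ≤ q * u k) (h₀ : u k₀ ≤ B) :
    ∀ k, k₀ ≤ k → u k ≤ B := by
  intro k hk
  induction k, hk using Nat.le_induction with
  | base => exact h₀
  | succ n _ ih => exact (hstep n ih).trans ((mul_le_of_le_one_left (hu n) hq).trans ih)

theorem stmt7_general {H : Type*} [NormedAddCommGroup H] [InnerProductSpace ℝ H]
    (L : H → ℝ) (grad : H → H) (hess : H → H →L[ℝ] H)
    (hhess : ∀ x, HasFDerivAt grad (hess x) x)
    (μ : ℝ) (hμ : 0 < μ)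
    (hstrong : ∀ x y : H, L y ≥ L x + ⟪grad x, y - x⟫ + (μ / 2) * ‖y - x‖ ^ 2)
    (M : ℝ) (hM : 0 < M)
    (hlip : ∀ x y : H, ‖hess x - hess y‖ ≤ 2 * M * ‖x - y‖)
    (η : ℝ) (hη0 : 0 < η) (hη1 : η ≤ 1)
    (C : ℝ) (hC : 1 ≤ C)
    (γ : ℝ) (hγ0 : 0 < γ)
    (F fw : ℕ → H)
    (lam : ℕ → ℝ) (hlam : ∀ k, lam k = C * Real.sqrt (M * ‖grad (F k)‖))
    (hiter : ∀ k, F (k + 1) = F k + η • fw k)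
    (hedge : ∀ k, ‖-(hess (F k) (fw k) + lam k • fw k) - grad (F k)‖ ^ 2
      ≤ (1 - γ ^ 2) * ‖grad (F k)‖ ^ 2)
    (k₀ : ℕ)
    (hk₀ : ‖grad (F k₀)‖ ≤ μ ^ 2 / (4 * C ^ 2 * M) *
      ((1 - Real.sqrt (1 - γ ^ 2)) / (1 + Real.sqrt (1 - γ ^ 2))) ^ 2) :
    let ρ : ℝ := 1 - η * (1 - Real.sqrt (1 - γ ^ 2))
    ρ < 1 ∧
    (∀ k, k₀ ≤ k → ‖grad (F (k + 1))‖ ≤ (3 + ρ) / 4 * ‖grad (F k)‖) ∧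
    (∀ k, k₀ ≤ k → ‖grad (F k)‖ ≤ ((3 + ρ) / 4) ^ (k - k₀) * ‖grad (F k₀)‖) := by
  intro ρ
  set s := √(1 - γ ^ 2) with hs
  have hs0 : 0 ≤ s := Real.sqrt_nonneg _
  have hs1 : s < 1 := by rw [hs, Real.sqrt_lt' one_pos]; nlinarith
  have hq : (3 + ρ) / 4 = 1 - η * (1 - s) / 4 := by ring
  have hcoer : ∀ x v, μ * ‖v‖ ^ 2 ≤ ⟪v, hess x v⟫ := fun x =>
    mul_norm_sq_le_inner_apply_of_hasFDerivAt
      (mul_norm_sq_le_inner_sub_of_strongConvex hstrong x) (hhess x)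
  have hstep : ∀ k, ‖grad (F k)‖ ≤ μ ^ 2 / (4 * C ^ 2 * M) * ((1 - s) / (1 + s)) ^ 2 →
      ‖grad (F (k + 1))‖ ≤ (3 + ρ) / 4 * ‖grad (F k)‖ := by
    intro k hk
    have htaylor := norm_sub_sub_fderiv_le_of_lipschitz hhess hlip (F k) (F k + η • fw k)
    rw [add_sub_cancel_left] at htaylor
    rw [hq, hiter]
    refine norm_newton_step_le hμ (hcoer (F k)) hM.le hC
      (mul_sqrt_mul_le_of_le hμ hM (by linarith) hs0 hs1.le hk) hη0.le hη1 hs0 ?_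
      (htaylor.trans_eq (by ring))
    rw [← hlam]
    simpa [Real.sqrt_mul' _ (sq_nonneg _)] using Real.abs_le_sqrt (hedge k)
  have hq0 : 0 ≤ (3 + ρ) / 4 := by nlinarith
  have hq1 : (3 + ρ) / 4 ≤ 1 := by nlinarith
  have hcontract : ∀ k, k₀ ≤ k → ‖grad (F (k + 1))‖ ≤ (3 + ρ) / 4 * ‖grad (F k)‖ :=
    fun k hk => hstep k (forall_le_of_step_le_mul (fun _ => norm_nonneg _) hq1 hstep hk₀ k hk)
  refine ⟨by nlinarith, hcontract, fun k hk => ?_⟩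
  obtain ⟨j, rfl⟩ := Nat.exists_eq_add_of_le hk
  simpa using le_geom (u := fun i => ‖grad (F (k₀ + i))‖) hq0 j
    (fun i _ => hcontract (k₀ + i) (Nat.le_add_right k₀ i))

/-- **Local Rate.** For a `μ`-strongly convex loss with `2M`-Lipschitz Hessian,
gradient-regularized restricted Newton descent with `λ_k = C√(M‖g_k‖)` (`C ≥ 1`),
learning rate `η ∈ (0,1]` and weak gradient edge `γ ∈ (0,1]` contracts the gradient norm
linearly once `‖g_{k₀}‖ ≤ (μ²/(4C²M)) ((1−√(1−γ²))/(1+√(1−γ²)))²`: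
`‖g_{k+1}‖ ≤ ((3+ρ)/4)‖g_k‖` for all `k ≥ k₀`, where `ρ = 1 − η(1−√(1−γ²)) < 1`. -/
theorem stmt7 {H : Type*} [NormedAddCommGroup H] [InnerProductSpace ℝ H] [CompleteSpace H]
    (L : H → ℝ) (grad : H → H) (hess : H → H →L[ℝ] H)
    (hgrad : ∀ x, HasGradientAt L (grad x) x)
    (hhess : ∀ x, HasFDerivAt grad (hess x) x)
    (μ : ℝ) (hμ : 0 < μ)
    (hstrong : ∀ x y : H, L y ≥ L x + ⟪grad x, y - x⟫ + (μ / 2) * ‖y - x‖ ^ 2)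
    (M : ℝ) (hM : 0 < M)
    (hlip : ∀ x y : H, ‖hess x - hess y‖ ≤ 2 * M * ‖x - y‖)
    (Fam : Set H) (hscale : ∀ f ∈ Fam, ∀ a : ℝ, a • f ∈ Fam)
    (η : ℝ) (hη0 : 0 < η) (hη1 : η ≤ 1)
    (C : ℝ) (hC : 1 ≤ C)
    (γ : ℝ) (hγ0 : 0 < γ) (hγ1 : γ ≤ 1)
    (F fw : ℕ → H)
    (lam : ℕ → ℝ) (hlam : ∀ k, lam k = C * Real.sqrt (M * ‖grad (F k)‖))
    (hmem : ∀ k, fw k ∈ Fam)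
    (hmin : ∀ k, ∀ q ∈ Fam,
      ⟪fw k, grad (F k)⟫ + (1 / 2) * ⟪fw k, hess (F k) (fw k)⟫ + (lam k / 2) * ‖fw k‖ ^ 2
        ≤ ⟪q, grad (F k)⟫ + (1 / 2) * ⟪q, hess (F k) q⟫ + (lam k / 2) * ‖q‖ ^ 2)
    (hiter : ∀ k, F (k + 1) = F k + η • fw k)
    (hedge : ∀ k, ‖-(hess (F k) (fw k) + lam k • fw k) - grad (F k)‖ ^ 2
      ≤ (1 - γ ^ 2) * ‖grad (F k)‖ ^ 2)
    (k₀ : ℕ)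
    (hk₀ : ‖grad (F k₀)‖ ≤ μ ^ 2 / (4 * C ^ 2 * M) *
      ((1 - Real.sqrt (1 - γ ^ 2)) / (1 + Real.sqrt (1 - γ ^ 2))) ^ 2) :
    let ρ : ℝ := 1 - η * (1 - Real.sqrt (1 - γ ^ 2))
    ρ < 1 ∧
    (∀ k, k₀ ≤ k → ‖grad (F (k + 1))‖ ≤ (3 + ρ) / 4 * ‖grad (F k)‖) ∧
    (∀ k, k₀ ≤ k → ‖grad (F k)‖ ≤ ((3 + ρ) / 4) ^ (k - k₀) * ‖grad (F k₀)‖) :=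
  stmt7_general L grad hess hhess μ hμ hstrong M hM hlip η hη0 hη1 C hC γ hγ0 F fw lam hlam hiter
    hedge k₀ hk₀
end

section
/- Let c > 0 and let (α_k)_{k≥0} be a nonincreasing sequence of nonnegative real numbers satisfying 0 ≤ α_{k+1} ≤ α_k − c α_k^{3/2} for all k ≥ 0. Then for all k ≥ 0, α_k ≤ 1/(1/√α_0 + (c/2)k)² ≤ 4/(c²(k + 2)²). -/
/-! Put `u_k = 1/√α_k`. The recursion gives `√α_{k+1} ≤ √α_k (1 - (c/2)√α_k)`, since
`(1 - x)(1 + x/2)² = 1 - x²(3 + x)/4 ≤ 1` for `x = c√α_k`; hence `u_{k+1} ≥ u_k + c/2` and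
`u_k ≥ u_0 + (c/2)k`. Nonnegativity of `α_1` forces `c√α_0 ≤ 1`, i.e. `u_0 ≥ c`, which turns
the first bound into the second. -/

open Real

lemma pos_of_le_sub_mul_mul_sqrt {a b c : ℝ} (hb : 0 < b) (h : b ≤ a - c * (a * √a)) :
    0 < a := by
  by_contra! ha
  rw [sqrt_eq_zero'.2 ha] at h
  linarith

lemma one_div_sqrt_add_le_of_le_sub_mul_mul_sqrt {a b c : ℝ} (hb : 0 < b)
    (h : b ≤ a - c * (a * √a)) : 1 / √a + c / 2 ≤ 1 / √b := by
  have ha := pos_of_le_sub_mul_mul_sqrt hb h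
  obtain ⟨s, hs, rfl⟩ : ∃ s, 0 < s ∧ s ^ 2 = a := ⟨√a, sqrt_pos.2 ha, sq_sqrt ha.le⟩
  obtain ⟨t, ht, rfl⟩ : ∃ t, 0 < t ∧ t ^ 2 = b := ⟨√b, sqrt_pos.2 hb, sq_sqrt hb.le⟩
  rw [sqrt_sq hs.le, sqrt_sq ht.le] at *
  suffices t * (1 + c * s / 2) ≤ s by
    rw [div_add' _ _ _ hs.ne', div_le_div_iff₀ hs ht]
    nlinarith
  rcases le_or_gt (1 + c * s / 2) 0 with hx | hx
  · nlinarith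
  have hsq : (t * (1 + c * s / 2)) ^ 2 ≤ s ^ 2 := by
    calc (t * (1 + c * s / 2)) ^ 2 ≤ (s ^ 2 - c * (s ^ 2 * s)) * (1 + c * s / 2) ^ 2 := by
          rw [mul_pow]; gcongr
      _ = s ^ 2 * (1 - (c * s) ^ 2 * (3 + c * s) / 4) := by ring
      _ ≤ s ^ 2 := by
          have hcube : 0 ≤ (c * s) ^ 2 * (3 + c * s) := by
            apply mul_nonneg (sq_nonneg _); linarith
          nlinarith
  exact (pow_le_pow_iff_left₀ (by positivity) hs.le two_ne_zero).1 hsq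

lemma le_one_div_sqrt_of_le_sub_mul_mul_sqrt {a b c : ℝ} (ha : 0 < a) (hb : 0 ≤ b)
    (h : b ≤ a - c * (a * √a)) : c ≤ 1 / √a := by
  have hs := sqrt_pos.2 ha
  rw [le_div_iff₀ hs]
  nlinarith

section Sequence

variable {c : ℝ} {α : ℕ → ℝ} (hrec : ∀ k, α (k + 1) ≤ α k - c * (α k * √(α k)))
include hrec

lemma pos_zero_of_pos_of_le_sub_mul_mul_sqrt {k : ℕ} (hk : 0 < α k) : 0 < α 0 := by
  induction k with
  | zero => exact hk
  | succ n ih => exact ih (pos_of_le_sub_mul_mul_sqrt hk (hrec n))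

lemma one_div_sqrt_zero_add_le_of_le_sub_mul_mul_sqrt {k : ℕ} (hk : 0 < α k) :
    1 / √(α 0) + c / 2 * k ≤ 1 / √(α k) := by
  induction k with
  | zero => simp
  | succ n ih =>
    have step := one_div_sqrt_add_le_of_le_sub_mul_mul_sqrt hk (hrec n)
    push_cast
    linarith [ih (pos_of_le_sub_mul_mul_sqrt hk (hrec n))]

lemma le_one_div_sq_of_le_sub_mul_mul_sqrt (hc : 0 ≤ c) {k : ℕ} (hk : 0 < α k) :
    α k ≤ 1 / (1 / √(α 0) + c / 2 * k) ^ 2 := by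
  have h0 := pos_zero_of_pos_of_le_sub_mul_mul_sqrt hrec hk
  have hX : 0 < 1 / √(α 0) + c / 2 * k := by
    have := sqrt_pos.2 h0
    positivity
  calc α k = 1 / (1 / √(α k)) ^ 2 := by rw [div_pow, one_pow, one_div_one_div, sq_sqrt hk.le]
    _ ≤ 1 / (1 / √(α 0) + c / 2 * k) ^ 2 := by
      gcongr
      exact one_div_sqrt_zero_add_le_of_le_sub_mul_mul_sqrt hrec hk

end Sequence

theorem stmt9_general (c : ℝ) (hc : 0 < c) (α : ℕ → ℝ)
    (hnonneg : ∀ k, 0 ≤ α k)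
    (hrec : ∀ k, α (k + 1) ≤ α k - c * (α k * Real.sqrt (α k))) :
    ∀ k : ℕ,
      α k ≤ 1 / (1 / Real.sqrt (α 0) + (c / 2) * (k : ℝ)) ^ 2 ∧
      α k ≤ 4 / (c ^ 2 * ((k : ℝ) + 2) ^ 2) := by
  intro k
  rcases (hnonneg k).eq_or_lt with hk | hk
  · rw [← hk]
    constructor <;> positivity
  have first := le_one_div_sq_of_le_sub_mul_mul_sqrt hrec hc.le hk
  have hc0 : c ≤ 1 / √(α 0) :=
    le_one_div_sqrt_of_le_sub_mul_mul_sqrt (pos_zero_of_pos_of_le_sub_mul_mul_sqrt hrec hk)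
      (hnonneg 1) (hrec 0)
  refine ⟨first, first.trans ?_⟩
  calc 1 / (1 / √(α 0) + c / 2 * k) ^ 2 ≤ 1 / (c / 2 * (k + 2)) ^ 2 := by
        gcongr
        linarith
    _ = 4 / (c ^ 2 * ((k : ℝ) + 2) ^ 2) := by field_simp; ring

/-- If `(α_k)` is a nonincreasing sequence of nonnegative reals with
`α_{k+1} ≤ α_k − c α_k^{3/2}` (where `α^{3/2} = α·√α`) for some `c > 0`, then
`α_k ≤ 1/(1/√α₀ + (c/2)k)² ≤ 4/(c²(k+2)²)` for all `k`. -/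
theorem stmt9 (c : ℝ) (hc : 0 < c) (α : ℕ → ℝ)
    (hnonneg : ∀ k, 0 ≤ α k)
    (hmono : ∀ k, α (k + 1) ≤ α k)
    (hrec : ∀ k, α (k + 1) ≤ α k - c * (α k * Real.sqrt (α k))) :
    ∀ k : ℕ,
      α k ≤ 1 / (1 / Real.sqrt (α 0) + (c / 2) * (k : ℝ)) ^ 2 ∧
      α k ≤ 4 / (c ^ 2 * ((k : ℝ) + 2) ^ 2) :=
  stmt9_general c hc α hnonneg hrec
end

section
/- Let L(x) = √(1 + x²), fix a learning rate η > 0, and consider the damped Newton iteration x_{k+1} = x_k − η L'(x_k)/L''(x_k), which equals x_{k+1} = x_k (1 − η(1 + x_k²)). Define X(η) := √(max{0, 3/η − 1}). Then every initialization with |x_0| ≥ X(η) satisfies |x_{k+1}| ≥ 2|x_k| for all k ≥ 0; in particular, if additionally x_0 ≠ 0, then |x_k| → ∞. -/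
/-!
For `L = √(1 + t²)` one has `L' = t / √(1 + t²)` and `L'' = (1 + t²)^(-3/2)`, so the damped
Newton map is `x ↦ x (1 - η (1 + x²))`. Once `|x| ≥ X(η)`, i.e. `η (1 + x²) ≥ 3`, the factor
`1 - η (1 + x²)` is at most `-2`, so the map at least doubles `|x|`; in particular it stays above
the threshold, and the orbit grows geometrically.
-/

theorem hasDerivAt_sqrt_one_add_sq (t : ℝ) :
    HasDerivAt (fun t : ℝ => √(1 + t ^ 2)) (t / √(1 + t ^ 2)) t := by
  have hsq : HasDerivAt (fun t : ℝ => 1 + t ^ 2) (2 * t) t := by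
    simpa using (hasDerivAt_pow 2 t).const_add 1
  convert hsq.sqrt (by positivity) using 1
  rw [mul_div_mul_left _ _ two_ne_zero]

theorem hasDerivAt_div_sqrt_one_add_sq (t : ℝ) :
    HasDerivAt (fun t : ℝ => t / √(1 + t ^ 2)) (1 / ((1 + t ^ 2) * √(1 + t ^ 2))) t := by
  have hpos : 0 < √(1 + t ^ 2) := by positivity
  have hsq : √(1 + t ^ 2) ^ 2 = 1 + t ^ 2 := Real.sq_sqrt (by positivity)
  refine ((hasDerivAt_id' t).div (hasDerivAt_sqrt_one_add_sq t) hpos.ne').congr_deriv ?_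
  field_simp
  rw [hsq]
  ring

theorem deriv_div_iteratedDeriv_two_sqrt_one_add_sq (t : ℝ) :
    deriv (fun t : ℝ => √(1 + t ^ 2)) t / iteratedDeriv 2 (fun t : ℝ => √(1 + t ^ 2)) t =
      t * (1 + t ^ 2) := by
  have hderiv : deriv (fun t : ℝ => √(1 + t ^ 2)) = fun t => t / √(1 + t ^ 2) :=
    funext fun t => (hasDerivAt_sqrt_one_add_sq t).deriv
  have hpos : 0 < √(1 + t ^ 2) := by positivity
  rw [iteratedDeriv_succ, iteratedDeriv_one, hderiv,
    (hasDerivAt_div_sqrt_one_add_sq t).deriv]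
  field_simp

theorem three_le_mul_one_add_sq_of_sqrt_le {η y : ℝ} (hη : 0 < η)
    (hy : √(max 0 (3 / η - 1)) ≤ |y|) : 3 ≤ η * (1 + y ^ 2) := by
  have hmax : max 0 (3 / η - 1) ≤ y ^ 2 := by
    rw [← sq_abs y]
    exact (Real.sqrt_le_left (abs_nonneg y)).mp hy
  have h : 3 / η ≤ 1 + y ^ 2 := by linarith [le_max_right 0 (3 / η - 1)]
  rwa [div_le_iff₀ hη, mul_comm] at h

theorem two_mul_abs_le_abs_mul_one_sub {y c : ℝ} (hc : 3 ≤ c) : 2 * |y| ≤ |y * (1 - c)| := by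
  have hfactor : 2 ≤ |1 - c| := by
    rw [abs_of_neg (by linarith)]
    linarith
  rw [abs_mul, mul_comm 2]
  exact mul_le_mul_of_nonneg_left hfactor (abs_nonneg y)

/-- Doubling preserves `r ≤ |y|`, so the hypothesis applies along the whole orbit. -/
theorem two_mul_abs_le_abs_succ_of_orbit {f : ℝ → ℝ} {r : ℝ}
    (hf : ∀ y, r ≤ |y| → 2 * |y| ≤ |f y|) {x : ℕ → ℝ} (hx : ∀ k, x (k + 1) = f (x k))
    (h0 : r ≤ |x 0|) (k : ℕ) : 2 * |x k| ≤ |x (k + 1)| := by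
  have habove : ∀ k, r ≤ |x k| := by
    intro k
    induction k with
    | zero => exact h0
    | succ n ih =>
      rw [hx n]
      linarith [hf _ ih, abs_nonneg (x n)]
  rw [hx k]
  exact hf _ (habove k)

/-- For `L(x) = √(1+x²)` and learning rate `η > 0`, the damped Newton
iteration `x_{k+1} = x_k − η L'(x_k)/L''(x_k)` equals `x_{k+1} = x_k(1 − η(1 + x_k²))`, and
every initialization with `|x₀| ≥ X(η) := √(max{0, 3/η − 1})` satisfies `|x_{k+1}| ≥ 2|x_k|`
for all `k`; in particular, if additionally `x₀ ≠ 0`, then `|x_k| → ∞`. -/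
theorem stmt11 (L : ℝ → ℝ) (hLdef : ∀ t, L t = Real.sqrt (1 + t ^ 2))
    (η : ℝ) (hη : 0 < η)
    (x : ℕ → ℝ)
    (hrec : ∀ k, x (k + 1) = x k - η * (deriv L (x k) / iteratedDeriv 2 L (x k)))
    (hX : Real.sqrt (max 0 (3 / η - 1)) ≤ |x 0|) :
    (∀ k, x (k + 1) = x k * (1 - η * (1 + (x k) ^ 2))) ∧
    (∀ k, 2 * |x k| ≤ |x (k + 1)|) ∧
    (x 0 ≠ 0 → Filter.Tendsto (fun k => |x k|) Filter.atTop Filter.atTop) := by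
  obtain rfl : L = fun t => √(1 + t ^ 2) := funext hLdef
  have hnewton : ∀ k, x (k + 1) = x k * (1 - η * (1 + x k ^ 2)) := fun k => by
    rw [hrec k, deriv_div_iteratedDeriv_two_sqrt_one_add_sq]
    ring
  have hdouble : ∀ k, 2 * |x k| ≤ |x (k + 1)| :=
    two_mul_abs_le_abs_succ_of_orbit
      (fun y hy => two_mul_abs_le_abs_mul_one_sub (three_le_mul_one_add_sq_of_sqrt_le hη hy))
      hnewton hX
  exact ⟨hnewton, hdouble, fun h0 => tendsto_atTop_of_geom_le (abs_pos.mpr h0) one_lt_two hdouble⟩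
end

section
/- Let d : [0, ∞) → [0, ∞) be continuous with d(0) = 0 and d(x) > 0 for all x > 0, and suppose there exist δ > 0 and C_0 < ∞ such that |d(x) − x| ≤ C_0 x² for all x ∈ [0, δ]. For x > 0 define Φ(x) := ∫_1^x ds/d(s), L_+'(x) := a e^{Φ(x)} for a fixed a > 0, L_+(x) := ∫_0^x L_+'(t) dt, and extend evenly by L(x) := L_+(|x|), with L(0) := 0. Let d̃ denote the odd extension d̃(x) := sign(x) d(|x|), d̃(0) := 0. Then: (i) L is even, convex, and C² on ℝ, with L''(x) > 0 for x ≠ 0, L'(x) = L_+'(x) and L''(x) = L_+'(x)/d(x) for x > 0; (ii) L'(x)/L''(x) = d̃(x) for all x ≠ 0, so the classical Newton update for L is exactly N(x) = x − d̃(x); (iii) if in addition there exist X_0 > 0 and β > 1 such that d(x) ≥ (1 + β) x for all x ≥ X_0, then every Newton iterate sequence x_{k+1} = x_k − d̃(x_k) with |x_0| ≥ X_0 satisfies |x_{k+1}| ≥ β |x_k| for all k ≥ 0, hence diverges. -/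
/-!
Write `1 / d s = 1 / s + h s`. The hypothesis `d s = s + O(s²)` makes `h` bounded near `0`,
so `L₊'(t) = a e^{Φ(t)} = t · M(t)` with `M(t) = a exp ∫₁ᵗ h` continuous and positive on
`[0, ∞)`. Hence `x ↦ x M(|x|)` is a continuous odd extension of `L₊'`, `L` is its primitive,
and `L''(x) = M(|x|) · |x| / d(|x|)` tends to `M(0) > 0` at the origin. Off the origin
`L'/L'' = d̃` is then immediate, and `d(x) ≥ (1 + β) x` gives
`|x - d̃(x)| = |d(|x|) - |x|| ≥ β |x|`.
-/

open MeasureTheory Set Filter Topology Asymptotics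

theorem Function.Odd.integral_zero_neg {f : ℝ → ℝ} (hf : f.Odd) (x : ℝ) :
    ∫ t in (0 : ℝ)..-x, f t = ∫ t in (0 : ℝ)..x, f t := by
  have h := intervalIntegral.integral_comp_neg (a := 0) (b := x) f
  simp only [hf.eq, intervalIntegral.integral_neg, neg_zero] at h
  rw [intervalIntegral.integral_symm, ← h, neg_neg]

theorem Function.Odd.hasDerivAt_neg {f : ℝ → ℝ} (hf : f.Odd) {f' x : ℝ}
    (h : HasDerivAt f f' x) : HasDerivAt f f' (-x) := by
  rw [← neg_neg x] at h
  have := (h.comp (-x) (_root_.hasDerivAt_neg (-x))).neg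
  rw [mul_neg_one, neg_neg] at this
  have hf' : -f ∘ Neg.neg = f := funext fun y => by simp [hf.eq]
  rwa [hf'] at this

theorem intervalIntegrable_of_integrableAtFilter_nhdsGT {f : ℝ → ℝ} {a b : ℝ}
    (hf : ContinuousOn f (Ioi a)) (hfa : IntegrableAtFilter f (𝓝[>] a)) (hab : a < b) :
    IntervalIntegrable f volume a b := by
  obtain ⟨s, hs, hfs⟩ := hfa
  obtain ⟨u, hu, hus⟩ := mem_nhdsGT_iff_exists_Ioo_subset.1 hs
  obtain ⟨c, hac, hcu⟩ := exists_between (mem_Ioi.1 hu)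
  refine IntervalIntegrable.trans (b := c) ?_ ?_
  · rw [intervalIntegrable_iff_integrableOn_Ioc_of_le hac.le]
    exact hfs.mono_set ((Ioc_subset_Ioo_right hcu).trans hus)
  · exact (hf.mono fun y hy => lt_of_lt_of_le (lt_min hac hab) hy.1).intervalIntegrable

theorem abs_sub_sign_mul {y : ℝ} (hy : y ≠ 0) (D : ℝ) :
    |y - Real.sign y * D| = |(D - |y|)| := by
  rcases hy.lt_or_gt with hy | hy
  · rw [Real.sign_of_neg hy, abs_of_neg hy, show y - -1 * D = D - -y by ring]
  · rw [Real.sign_of_pos hy, abs_of_pos hy, one_mul, abs_sub_comm]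

section Drift

variable {d : ℝ → ℝ}

theorem tendsto_div_self_of_abs_sub_le_sq {δ C : ℝ} (hδ : 0 < δ)
    (hquad : ∀ x ∈ Icc 0 δ, |d x - x| ≤ C * x ^ 2) :
    Tendsto (fun s => d s / s) (𝓝[>] 0) (𝓝 1) := by
  have hC : Tendsto (fun s : ℝ => C * s) (𝓝[>] 0) (𝓝 0) := by
    simpa using ((continuous_const_mul C).tendsto 0).mono_left nhdsWithin_le_nhds
  refine tendsto_sub_nhds_zero_iff.1 (squeeze_zero_norm' ?_ hC)
  filter_upwards [Ioo_mem_nhdsGT hδ] with s hs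
  rw [Real.norm_eq_abs, div_sub_one hs.1.ne', abs_div, abs_of_pos hs.1,
    div_le_iff₀ hs.1, mul_assoc, ← sq]
  exact hquad s (Ioo_subset_Icc_self hs)

theorem isBigO_inv_sub_inv_of_abs_sub_le_sq (hd_pos : ∀ x, 0 < x → 0 < d x) {δ C : ℝ}
    (hδ : 0 < δ) (hquad : ∀ x ∈ Icc 0 δ, |d x - x| ≤ C * x ^ 2) :
    (fun s => 1 / d s - 1 / s) =O[𝓝[>] 0] (fun _ => (1 : ℝ)) := by
  have hratio : Tendsto (fun s => s / d s) (𝓝[>] 0) (𝓝 1) := by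
    simpa using (tendsto_div_self_of_abs_sub_le_sq hδ hquad).inv₀ one_ne_zero
  refine (IsBigO.of_bound C ?_).trans (hratio.isBigO_one ℝ)
  filter_upwards [Ioo_mem_nhdsGT hδ] with s hs
  have hds := hd_pos s hs.1
  rw [Real.norm_eq_abs, Real.norm_eq_abs, abs_of_pos (div_pos hs.1 hds),
    div_sub_div _ _ hds.ne' hs.1.ne', abs_div, abs_of_pos (mul_pos hds hs.1),
    div_le_iff₀ (mul_pos hds hs.1), one_mul, mul_one, abs_sub_comm]
  calc |d s - s| ≤ C * s ^ 2 := hquad s (Ioo_subset_Icc_self hs)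
    _ = C * (s / d s) * (d s * s) := by field_simp

theorem tendsto_self_div_of_isBigO
    (hbig : (fun s => 1 / d s - 1 / s) =O[𝓝[>] 0] (fun _ => (1 : ℝ))) :
    Tendsto (fun s => s / d s) (𝓝[>] 0) (𝓝 1) := by
  have hs : Tendsto (fun s : ℝ => s) (𝓝[>] 0) (𝓝 0) :=
    tendsto_nhdsWithin_of_tendsto_nhds tendsto_id
  have := ((isBigO_refl (fun s : ℝ => s) _).mul hbig).trans_tendsto (by simpa using hs)
  refine tendsto_sub_nhds_zero_iff.1 (this.congr' ?_)
  filter_upwards [self_mem_nhdsWithin] with s hs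
  have : s ≠ 0 := (mem_Ioi.1 hs).ne'
  field_simp

theorem continuousOn_inv_sub_inv (hd : ContinuousOn d (Ioi 0)) (hd_pos : ∀ x, 0 < x → 0 < d x) :
    ContinuousOn (fun s => 1 / d s - 1 / s) (Ioi 0) :=
  (continuousOn_const.div hd fun s hs => (hd_pos s hs).ne').sub
    (continuousOn_const.div continuousOn_id fun _ hs => (mem_Ioi.1 hs).ne')

theorem intervalIntegrable_inv_sub_inv (hd : ContinuousOn d (Ioi 0))
    (hd_pos : ∀ x, 0 < x → 0 < d x)
    (hbig : (fun s => 1 / d s - 1 / s) =O[𝓝[>] 0] (fun _ => (1 : ℝ))) {b : ℝ} (hb : 0 < b) :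
    IntervalIntegrable (fun s => 1 / d s - 1 / s) volume 0 b := by
  have hcont := continuousOn_inv_sub_inv hd hd_pos
  refine intervalIntegrable_of_integrableAtFilter_nhdsGT hcont ?_ hb
  exact (Measure.finiteAt_nhdsWithin volume 0 _).integrableAtFilter
    (hcont.stronglyMeasurableAtFilter_nhdsWithin measurableSet_Ioi 0) ((isBigO_one_iff ℝ).1 hbig)

variable (d) in
noncomputable def lossSlope (a t : ℝ) : ℝ := a * Real.exp (∫ s in (1 : ℝ)..t, 1 / d s)

variable (d) in
noncomputable def loss (a x : ℝ) : ℝ := ∫ t in (0 : ℝ)..|x|, lossSlope d a t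

variable (d) in
/-- `lossSlope d a t / t` for `t > 0`, written so that it extends continuously to `t = 0`. -/
noncomputable def slopeFactor (a t : ℝ) : ℝ :=
  a * Real.exp (∫ s in (1 : ℝ)..t, (1 / d s - 1 / s))

theorem lossSlope_pos {a : ℝ} (ha : 0 < a) (t : ℝ) : 0 < lossSlope d a t :=
  mul_pos ha (Real.exp_pos _)

theorem slopeFactor_pos {a : ℝ} (ha : 0 < a) (t : ℝ) : 0 < slopeFactor d a t :=
  mul_pos ha (Real.exp_pos _)

theorem lossSlope_eq_mul_slopeFactor (hd : ContinuousOn d (Ioi 0))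
    (hd_pos : ∀ x, 0 < x → 0 < d x) (a : ℝ) {t : ℝ} (ht : 0 < t) :
    lossSlope d a t = t * slopeFactor d a t := by
  have hsub : uIcc 1 t ⊆ Ioi 0 := fun s hs => lt_of_lt_of_le (lt_min one_pos ht) hs.1
  have hsplit : ∫ s in (1 : ℝ)..t, 1 / d s
      = (∫ s in (1 : ℝ)..t, 1 / s) + ∫ s in (1 : ℝ)..t, (1 / d s - 1 / s) := by
    have hinv : ContinuousOn (fun s : ℝ => 1 / s) (uIcc 1 t) :=
      continuousOn_const.div continuousOn_id fun _ hs => (hsub hs).ne'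
    rw [← intervalIntegral.integral_add hinv.intervalIntegrable
      ((continuousOn_inv_sub_inv hd hd_pos).mono hsub).intervalIntegrable]
    simp only [add_sub_cancel]
  rw [lossSlope, slopeFactor, hsplit, integral_one_div_of_pos one_pos ht, div_one, Real.exp_add,
    Real.exp_log ht]
  ring

theorem hasDerivAt_lossSlope (hd : ContinuousOn d (Ioi 0)) (hd_pos : ∀ x, 0 < x → 0 < d x)
    (a : ℝ) {t : ℝ} (ht : 0 < t) : HasDerivAt (lossSlope d a) (lossSlope d a t / d t) t := by
  have hcont : ContinuousOn (fun s => 1 / d s) (Ioi 0) :=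
    continuousOn_const.div hd fun s hs => (hd_pos s hs).ne'
  have hΦ : HasDerivAt (fun t => ∫ s in (1 : ℝ)..t, 1 / d s) (1 / d t) t :=
    intervalIntegral.integral_hasDerivAt_right
      (hcont.mono fun s hs => lt_of_lt_of_le (lt_min one_pos ht) hs.1).intervalIntegrable
      (hcont.stronglyMeasurableAtFilter isOpen_Ioi t ht) (hcont.continuousAt (Ioi_mem_nhds ht))
  have h := hΦ.exp.const_mul a
  rwa [← mul_assoc, mul_one_div] at h

theorem continuousOn_slopeFactor (hd : ContinuousOn d (Ioi 0)) (hd_pos : ∀ x, 0 < x → 0 < d x)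
    (hbig : (fun s => 1 / d s - 1 / s) =O[𝓝[>] 0] (fun _ => (1 : ℝ))) (a : ℝ) :
    ContinuousOn (slopeFactor d a) (Ici 0) := by
  intro t ht
  have ht1 : 0 < t + 1 := by linarith [mem_Ici.1 ht]
  have hprim := intervalIntegral.continuousOn_primitive_interval' (a := 1)
    (intervalIntegrable_inv_sub_inv hd hd_pos hbig ht1)
    (by rw [uIcc_of_le ht1.le]; constructor <;> linarith [mem_Ici.1 ht])
  rw [uIcc_of_le ht1.le] at hprim
  have hnhds : Icc 0 (t + 1) ∈ 𝓝[Ici 0] t :=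
    mem_nhdsWithin.2 ⟨Iio (t + 1), isOpen_Iio, by simp, fun s hs => ⟨hs.2, hs.1.le⟩⟩
  exact ((continuousOn_const.mul hprim.rexp) t ⟨ht, by linarith⟩).mono_of_mem_nhdsWithin hnhds

variable (d) in
noncomputable def lossDeriv (a x : ℝ) : ℝ := x * slopeFactor d a |x|

variable (d) in
noncomputable def lossSecondDeriv (a : ℝ) : ℝ → ℝ :=
  Function.update (fun x => lossSlope d a |x| / d |x|) 0 (slopeFactor d a 0)

theorem lossDeriv_odd (a : ℝ) : (lossDeriv d a).Odd := fun x => by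
  simp only [lossDeriv, abs_neg, neg_mul]

theorem lossDeriv_of_pos (hd : ContinuousOn d (Ioi 0)) (hd_pos : ∀ x, 0 < x → 0 < d x)
    (a : ℝ) {x : ℝ} (hx : 0 < x) : lossDeriv d a x = lossSlope d a x := by
  rw [lossDeriv, abs_of_pos hx, lossSlope_eq_mul_slopeFactor hd hd_pos a hx]

theorem lossDeriv_of_ne_zero (hd : ContinuousOn d (Ioi 0)) (hd_pos : ∀ x, 0 < x → 0 < d x)
    (a : ℝ) {x : ℝ} (hx : x ≠ 0) : lossDeriv d a x = Real.sign x * lossSlope d a |x| := by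
  rw [lossDeriv, lossSlope_eq_mul_slopeFactor hd hd_pos a (abs_pos.2 hx)]
  rcases hx.lt_or_gt with hx | hx
  · rw [Real.sign_of_neg hx, abs_of_neg hx]; ring
  · rw [Real.sign_of_pos hx, abs_of_pos hx]; ring

theorem continuous_lossDeriv (hd : ContinuousOn d (Ioi 0)) (hd_pos : ∀ x, 0 < x → 0 < d x)
    (hbig : (fun s => 1 / d s - 1 / s) =O[𝓝[>] 0] (fun _ => (1 : ℝ))) (a : ℝ) :
    Continuous (lossDeriv d a) :=
  continuous_id.mul ((continuousOn_slopeFactor hd hd_pos hbig a).comp_continuous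
    continuous_abs abs_nonneg)

theorem loss_eq_integral_lossDeriv (hd : ContinuousOn d (Ioi 0))
    (hd_pos : ∀ x, 0 < x → 0 < d x) (a x : ℝ) :
    loss d a x = ∫ t in (0 : ℝ)..x, lossDeriv d a t := by
  have hpos : ∀ u, 0 ≤ u → loss d a u = ∫ t in (0 : ℝ)..u, lossDeriv d a t := by
    intro u hu
    rw [loss, abs_of_nonneg hu]
    refine intervalIntegral.integral_congr_ae (ae_of_all _ fun t ht => ?_)
    rw [uIoc_of_le hu] at ht
    exact (lossDeriv_of_pos hd hd_pos a ht.1).symm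
  rcases le_total 0 x with hx | hx
  · exact hpos x hx
  · rw [← (lossDeriv_odd a).integral_zero_neg, ← hpos (-x) (neg_nonneg.2 hx), loss, loss,
      abs_neg]

theorem hasDerivAt_loss (hd : ContinuousOn d (Ioi 0)) (hd_pos : ∀ x, 0 < x → 0 < d x)
    (hbig : (fun s => 1 / d s - 1 / s) =O[𝓝[>] 0] (fun _ => (1 : ℝ))) (a x : ℝ) :
    HasDerivAt (loss d a) (lossDeriv d a x) x := by
  rw [funext (loss_eq_integral_lossDeriv hd hd_pos a)]
  exact ((continuous_lossDeriv hd hd_pos hbig a).integral_hasStrictDerivAt 0 x).hasDerivAt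

theorem lossSecondDeriv_of_ne_zero (a : ℝ) {x : ℝ} (hx : x ≠ 0) :
    lossSecondDeriv d a x = lossSlope d a |x| / d |x| :=
  Function.update_of_ne hx ..

theorem lossSecondDeriv_pos (hd_pos : ∀ x, 0 < x → 0 < d x) {a : ℝ} (ha : 0 < a) (x : ℝ) :
    0 < lossSecondDeriv d a x := by
  rcases eq_or_ne x 0 with rfl | hx
  · rw [lossSecondDeriv, Function.update_self]
    exact slopeFactor_pos ha 0
  · rw [lossSecondDeriv_of_ne_zero a hx]
    exact div_pos (lossSlope_pos ha _) (hd_pos _ (abs_pos.2 hx))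

theorem continuous_lossSecondDeriv (hd : ContinuousOn d (Ioi 0)) (hd_pos : ∀ x, 0 < x → 0 < d x)
    (hbig : (fun s => 1 / d s - 1 / s) =O[𝓝[>] 0] (fun _ => (1 : ℝ))) (a : ℝ) :
    Continuous (lossSecondDeriv d a) := by
  rw [continuous_iff_continuousAt]
  intro x
  rcases eq_or_ne x 0 with rfl | hx
  · rw [lossSecondDeriv, continuousAt_update_same]
    have habs : Tendsto (fun x : ℝ => |x|) (𝓝[≠] 0) (𝓝[>] 0) :=
      tendsto_nhdsWithin_iff.2 ⟨(continuous_abs.tendsto' 0 0 abs_zero).mono_left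
        nhdsWithin_le_nhds, eventually_nhdsWithin_of_forall fun x hx => abs_pos.2 hx⟩
    have hfactor :
        Tendsto (fun x : ℝ => slopeFactor d a |x|) (𝓝[≠] 0) (𝓝 (slopeFactor d a 0)) :=
      ((continuousOn_slopeFactor hd hd_pos hbig a).continuousWithinAt self_mem_Ici).tendsto.comp
        (tendsto_nhdsWithin_mono_right (fun _ h => mem_Ici.2 (le_of_lt h)) habs)
    have hlim := hfactor.mul ((tendsto_self_div_of_isBigO hbig).comp habs)
    rw [mul_one] at hlim
    refine hlim.congr' (eventually_nhdsWithin_of_forall fun x hx => ?_)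
    simp only [Function.comp_apply]
    rw [lossSlope_eq_mul_slopeFactor hd hd_pos a (abs_pos.2 hx)]
    ring
  · have hx' : 0 < |x| := abs_pos.2 hx
    rw [lossSecondDeriv, continuousAt_update_of_ne hx]
    exact (((hasDerivAt_lossSlope hd hd_pos a hx').continuousAt.comp
      continuous_abs.continuousAt).div ((hd.continuousAt (Ioi_mem_nhds hx')).comp
      continuous_abs.continuousAt) (hd_pos _ hx').ne')

theorem hasDerivAt_lossDeriv_of_pos (hd : ContinuousOn d (Ioi 0))
    (hd_pos : ∀ x, 0 < x → 0 < d x) (a : ℝ) {x : ℝ} (hx : 0 < x) :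
    HasDerivAt (lossDeriv d a) (lossSlope d a x / d x) x :=
  (hasDerivAt_lossSlope hd hd_pos a hx).congr_of_eventuallyEq
    (eventually_of_mem (Ioi_mem_nhds hx) fun _ hy => lossDeriv_of_pos hd hd_pos a hy)

theorem hasDerivAt_lossDeriv (hd : ContinuousOn d (Ioi 0)) (hd_pos : ∀ x, 0 < x → 0 < d x)
    (hbig : (fun s => 1 / d s - 1 / s) =O[𝓝[>] 0] (fun _ => (1 : ℝ))) (a x : ℝ) :
    HasDerivAt (lossDeriv d a) (lossSecondDeriv d a x) x := by
  refine hasDerivAt_of_hasDerivAt_of_ne' (x := 0) (fun y hy => ?_)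
    (continuous_lossDeriv hd hd_pos hbig a).continuousAt
    (continuous_lossSecondDeriv hd hd_pos hbig a).continuousAt x
  rw [lossSecondDeriv_of_ne_zero a hy]
  rcases hy.lt_or_gt with hy | hy
  · have h := (lossDeriv_odd a).hasDerivAt_neg
      (hasDerivAt_lossDeriv_of_pos hd hd_pos a (neg_pos.2 hy))
    rwa [neg_neg, ← abs_of_neg hy] at h
  · rw [abs_of_pos hy]
    exact hasDerivAt_lossDeriv_of_pos hd hd_pos a hy

theorem deriv_loss (hd : ContinuousOn d (Ioi 0)) (hd_pos : ∀ x, 0 < x → 0 < d x)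
    (hbig : (fun s => 1 / d s - 1 / s) =O[𝓝[>] 0] (fun _ => (1 : ℝ))) (a : ℝ) :
    deriv (loss d a) = lossDeriv d a :=
  funext fun x => (hasDerivAt_loss hd hd_pos hbig a x).deriv

theorem deriv_lossDeriv (hd : ContinuousOn d (Ioi 0)) (hd_pos : ∀ x, 0 < x → 0 < d x)
    (hbig : (fun s => 1 / d s - 1 / s) =O[𝓝[>] 0] (fun _ => (1 : ℝ))) (a : ℝ) :
    deriv (lossDeriv d a) = lossSecondDeriv d a :=
  funext fun x => (hasDerivAt_lossDeriv hd hd_pos hbig a x).deriv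

theorem iteratedDeriv_two_loss (hd : ContinuousOn d (Ioi 0)) (hd_pos : ∀ x, 0 < x → 0 < d x)
    (hbig : (fun s => 1 / d s - 1 / s) =O[𝓝[>] 0] (fun _ => (1 : ℝ))) (a : ℝ) :
    iteratedDeriv 2 (loss d a) = lossSecondDeriv d a := by
  rw [iteratedDeriv_succ, iteratedDeriv_one, deriv_loss hd hd_pos hbig,
    deriv_lossDeriv hd hd_pos hbig]

theorem contDiff_two_loss (hd : ContinuousOn d (Ioi 0)) (hd_pos : ∀ x, 0 < x → 0 < d x)
    (hbig : (fun s => 1 / d s - 1 / s) =O[𝓝[>] 0] (fun _ => (1 : ℝ))) (a : ℝ) :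
    ContDiff ℝ 2 (loss d a) := by
  rw [show (2 : WithTop ℕ∞) = 1 + 1 from rfl, contDiff_succ_iff_deriv, contDiff_one_iff_deriv,
    deriv_loss hd hd_pos hbig, deriv_lossDeriv hd hd_pos hbig]
  exact ⟨fun x => (hasDerivAt_loss hd hd_pos hbig a x).differentiableAt, by simp,
    fun x => (hasDerivAt_lossDeriv hd hd_pos hbig a x).differentiableAt,
    continuous_lossSecondDeriv hd hd_pos hbig a⟩

theorem convexOn_loss (hd : ContinuousOn d (Ioi 0)) (hd_pos : ∀ x, 0 < x → 0 < d x)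
    (hbig : (fun s => 1 / d s - 1 / s) =O[𝓝[>] 0] (fun _ => (1 : ℝ))) {a : ℝ} (ha : 0 < a) :
    ConvexOn ℝ univ (loss d a) := by
  refine convexOn_univ_of_deriv2_nonneg
    ((contDiff_two_loss hd hd_pos hbig a).differentiable (by norm_num)) ?_ fun x => ?_
  · rw [deriv_loss hd hd_pos hbig]
    exact fun x => (hasDerivAt_lossDeriv hd hd_pos hbig a x).differentiableAt
  · rw [← iteratedDeriv_eq_iterate, iteratedDeriv_two_loss hd hd_pos hbig]
    exact (lossSecondDeriv_pos hd_pos ha x).le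

theorem lossDeriv_div_lossSecondDeriv (hd : ContinuousOn d (Ioi 0))
    (hd_pos : ∀ x, 0 < x → 0 < d x) {a : ℝ} (ha : 0 < a) {x : ℝ} (hx : x ≠ 0) :
    lossDeriv d a x / lossSecondDeriv d a x = Real.sign x * d |x| := by
  rw [lossDeriv_of_ne_zero hd hd_pos a hx, lossSecondDeriv_of_ne_zero a hx,
    mul_div_assoc, div_div_cancel₀ (lossSlope_pos ha _).ne']

end Drift

section Newton

variable {d : ℝ → ℝ} {X₀ β : ℝ}

theorem abs_newton_step_ge (hX₀ : 0 < X₀) (hgrow : ∀ x, X₀ ≤ x → (1 + β) * x ≤ d x)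
    {y : ℝ} (hy : X₀ ≤ |y|) : β * |y| ≤ |(y - Real.sign y * d |y|)| := by
  rw [abs_sub_sign_mul (abs_pos.1 (hX₀.trans_le hy))]
  linarith [hgrow _ hy, le_abs_self (d |y| - |y|)]

theorem newton_iterates_abs_growth (hX₀ : 0 < X₀) (hβ : 1 ≤ β)
    (hgrow : ∀ x, X₀ ≤ x → (1 + β) * x ≤ d x) {x : ℕ → ℝ}
    (hx : ∀ k, x (k + 1) = x k - Real.sign (x k) * d |x k|) (h0 : X₀ ≤ |x 0|) (k : ℕ) :
    β * |x k| ≤ |x (k + 1)| := by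
  have hlarge : ∀ k, X₀ ≤ |x k| := by
    intro k
    induction k with
    | zero => exact h0
    | succ k ih =>
      calc X₀ ≤ |x k| := ih
        _ ≤ β * |x k| := le_mul_of_one_le_left (abs_nonneg _) hβ
        _ ≤ |x (k + 1)| := hx k ▸ abs_newton_step_ge hX₀ hgrow ih
  exact hx k ▸ abs_newton_step_ge hX₀ hgrow (hlarge k)

end Newton

theorem stmt12_general (d : ℝ → ℝ)
    (hd_cont : ContinuousOn d (Set.Ici 0))
    (hd_pos : ∀ x : ℝ, 0 < x → 0 < d x)
    (δ C₀ : ℝ) (hδ : 0 < δ)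
    (hquad : ∀ x ∈ Set.Icc (0 : ℝ) δ, |d x - x| ≤ C₀ * x ^ 2)
    (a : ℝ) (ha : 0 < a)
    (Φ : ℝ → ℝ) (hΦ : ∀ x, Φ x = ∫ s in (1 : ℝ)..x, 1 / d s)
    (Lp : ℝ → ℝ) (hLp : ∀ x, Lp x = a * Real.exp (Φ x))
    (L : ℝ → ℝ) (hL : ∀ x, L x = ∫ t in (0 : ℝ)..|x|, Lp t)
    (dt : ℝ → ℝ) (hdt : ∀ x, dt x = Real.sign x * d |x|) :
    ((∀ x, L (-x) = L x) ∧
      ConvexOn ℝ Set.univ L ∧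
      ContDiff ℝ 2 L ∧
      (∀ x : ℝ, x ≠ 0 → 0 < iteratedDeriv 2 L x) ∧
      (∀ x : ℝ, 0 < x → deriv L x = Lp x) ∧
      (∀ x : ℝ, 0 < x → iteratedDeriv 2 L x = Lp x / d x)) ∧
    (∀ x : ℝ, x ≠ 0 → deriv L x / iteratedDeriv 2 L x = dt x) ∧
    (∀ X₀ β : ℝ, 0 < X₀ → 1 < β → (∀ x : ℝ, X₀ ≤ x → (1 + β) * x ≤ d x) →
      ∀ x : ℕ → ℝ, (∀ k, x (k + 1) = x k - dt (x k)) → X₀ ≤ |x 0| →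
        (∀ k, β * |x k| ≤ |x (k + 1)|) ∧
        Filter.Tendsto (fun k => |x k|) Filter.atTop Filter.atTop) := by
  obtain rfl : Lp = lossSlope d a := funext fun x => by rw [hLp, hΦ, lossSlope]
  obtain rfl : L = loss d a := funext hL
  obtain rfl : dt = fun x => Real.sign x * d |x| := funext hdt
  have hd := hd_cont.mono Ioi_subset_Ici_self
  have hbig := isBigO_inv_sub_inv_of_abs_sub_le_sq hd_pos hδ hquad
  rw [iteratedDeriv_two_loss hd hd_pos hbig, deriv_loss hd hd_pos hbig]
  refine ⟨⟨fun x => by rw [loss, loss, abs_neg], convexOn_loss hd hd_pos hbig ha,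
    contDiff_two_loss hd hd_pos hbig a, fun x _ => lossSecondDeriv_pos hd_pos ha x,
    fun x hx => lossDeriv_of_pos hd hd_pos a hx, fun x hx => ?_⟩,
    fun x hx => lossDeriv_div_lossSecondDeriv hd hd_pos ha hx,
    fun X₀ β hX₀ hβ hgrow x hx h0 => ?_⟩
  · rw [lossSecondDeriv_of_ne_zero a hx.ne', abs_of_pos hx]
  · have hgrowth := newton_iterates_abs_growth hX₀ hβ.le hgrow hx h0
    exact ⟨hgrowth, tendsto_atTop_of_geom_le (hX₀.trans_le h0) hβ hgrowth⟩

/-- **drift-to-loss generator.** Given a continuous drift `d` on `[0,∞)` with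
`d(0)=0`, `d>0` on `(0,∞)` and `|d(x)−x| ≤ C₀x²` near `0`, the loss built via
`Φ(x) = ∫₁ˣ ds/d(s)`, `L₊'(x) = a e^{Φ(x)}`, `L(x) = ∫₀^{|x|} L₊'(t) dt` is even, convex and
`C²` with `L''>0` off the origin, `L'(x) = L₊'(x)` and `L''(x) = L₊'(x)/d(x)` for `x>0`;
moreover `L'(x)/L''(x) = d̃(x)` (the odd extension of `d`), so the Newton update is
`N(x) = x − d̃(x)`, and if `d(x) ≥ (1+β)x` for `x ≥ X₀` with `β > 1`, any Newton sequence
started with `|x₀| ≥ X₀` satisfies `|x_{k+1}| ≥ β|x_k|` and diverges. -/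
theorem stmt12 (d : ℝ → ℝ)
    (hd_cont : ContinuousOn d (Set.Ici 0))
    (hd0 : d 0 = 0)
    (hd_pos : ∀ x : ℝ, 0 < x → 0 < d x)
    (hd_nonneg : ∀ x : ℝ, 0 ≤ x → 0 ≤ d x)
    (δ C₀ : ℝ) (hδ : 0 < δ)
    (hquad : ∀ x ∈ Set.Icc (0 : ℝ) δ, |d x - x| ≤ C₀ * x ^ 2)
    (a : ℝ) (ha : 0 < a)
    (Φ : ℝ → ℝ) (hΦ : ∀ x, Φ x = ∫ s in (1 : ℝ)..x, 1 / d s)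
    (Lp : ℝ → ℝ) (hLp : ∀ x, Lp x = a * Real.exp (Φ x))
    (L : ℝ → ℝ) (hL : ∀ x, L x = ∫ t in (0 : ℝ)..|x|, Lp t)
    (dt : ℝ → ℝ) (hdt : ∀ x, dt x = Real.sign x * d |x|) :
    ((∀ x, L (-x) = L x) ∧
      ConvexOn ℝ Set.univ L ∧
      ContDiff ℝ 2 L ∧
      (∀ x : ℝ, x ≠ 0 → 0 < iteratedDeriv 2 L x) ∧
      (∀ x : ℝ, 0 < x → deriv L x = Lp x) ∧
      (∀ x : ℝ, 0 < x → iteratedDeriv 2 L x = Lp x / d x)) ∧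
    (∀ x : ℝ, x ≠ 0 → deriv L x / iteratedDeriv 2 L x = dt x) ∧
    (∀ X₀ β : ℝ, 0 < X₀ → 1 < β → (∀ x : ℝ, X₀ ≤ x → (1 + β) * x ≤ d x) →
      ∀ x : ℕ → ℝ, (∀ k, x (k + 1) = x k - dt (x k)) → X₀ ≤ |x 0| →
        (∀ k, β * |x k| ≤ |x (k + 1)|) ∧
        Filter.Tendsto (fun k => |x k|) Filter.atTop Filter.atTop) :=
  stmt12_general d hd_cont hd_pos δ C₀ hδ hquad a ha Φ hΦ Lp hLp L hL dt hdt
end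

section
/- Let d : [0, ∞) → [0, ∞) be continuous with d(0) = 0, d(x) > 0 for x > 0, and |d(x) − x| ≤ C_0 x² on [0, δ] for some δ > 0, C_0 < ∞, and let L be the even C² convex function constructed from d via Φ(x) = ∫_1^x ds/d(s), L_+'(x) = a e^{Φ(x)} (a > 0), L(x) = ∫_0^{|x|} L_+'(t) dt. Assume additionally that d is C¹ on (0, ∞), that C_1 := sup_{x>0} |d'(x) − 1| / d(x) < ∞, and that there exist κ > 1 and X_1 > 0 with d(x) ≥ κ x for all x ≥ X_1. Then for every x > 0 the third derivative exists and satisfies L'''(x) = L''(x)(1 − d'(x))/d(x), the supremum sup_{x≠0} |L'''(x)| is finite, and consequently L'' is globally Lipschitz on ℝ (the Hessian of L is 2M-Lipschitz with 2M = sup_{x≠0} |L'''(x)|). -/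
/-!
For `x > 0`, `L' = L₊'` and `L₊'' = L₊'/d`, so `L'' = q := L₊'/d` and `L''' = q (1 - d')/d`;
hence `|L'''| ≤ C₁ q` and everything reduces to bounding `q` on `(0, ∞)`.
Since `q' ≥ -C₁ q`, the function `q(x) e^{C₁ x}` is nondecreasing (Grönwall), which bounds `q` on
`(0, X₁]`; since `d(x) ≥ x` for `x ≥ X₁`, the function `L₊'(x)/x` is nonincreasing there, and
`q ≤ L₊'(x)/x` bounds `q` beyond `X₁`.
Being Lipschitz on `(0, ∞)`, `q` has a limit `ℓ` at `0⁺`, and `L₊' = q d → 0`. This gives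
`L'(0) = 0`, then, by the derivative extension theorem applied to the odd function `L'`,
`L''(0) = ℓ` and continuity of `L''` at `0`. The mean value theorem makes `L''` Lipschitz on
`[0, ∞)`, and evenness of `L''` extends the bound to `ℝ`.
-/

open Real Set Filter Topology MeasureTheory
open scoped NNReal

lemma hasDerivAt_of_tendsto_deriv_nhdsNE {f : ℝ → ℝ} {x ℓ : ℝ}
    (hf : ∀ y ≠ x, DifferentiableAt ℝ f y) (hc : ContinuousAt f x)
    (hl : Tendsto (deriv f) (𝓝[≠] x) (𝓝 ℓ)) : HasDerivAt f ℓ x := by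
  classical
  simpa using hasDerivAt_of_hasDerivAt_of_ne (g := Function.update (deriv f) x ℓ)
    (fun y hy => by rw [Function.update_of_ne hy]; exact (hf y hy).hasDerivAt) hc
    (continuousAt_update_same.2 hl)

lemma monotoneOn_mul_exp_of_neg_mul_le_deriv {f f' : ℝ → ℝ} {D : Set ℝ} {C : ℝ}
    (hD : Convex ℝ D) (hf : ∀ x ∈ D, HasDerivAt f (f' x) x)
    (hf' : ∀ x ∈ D, -C * f x ≤ f' x) :
    MonotoneOn (fun x => f x * exp (C * x)) D := by
  have hderiv : ∀ x ∈ D,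
      HasDerivAt (fun x => f x * exp (C * x)) (exp (C * x) * (f' x + C * f x)) x := fun x hx =>
    ((hf x hx).mul ((hasDerivAt_id' x).const_mul C).exp).congr_deriv (by ring)
  refine monotoneOn_of_hasDerivWithinAt_nonneg hD
    (fun x hx => (hderiv x hx).continuousAt.continuousWithinAt)
    (fun x hx => (hderiv x (interior_subset hx)).hasDerivWithinAt) fun x hx => ?_
  have := hf' x (interior_subset hx)
  exact mul_nonneg (exp_pos _).le (by linarith)

lemma antitoneOn_div_self_of_mul_deriv_le {f f' : ℝ → ℝ} {D : Set ℝ} (hD : Convex ℝ D)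
    (hD0 : D ⊆ Ioi 0) (hf : ∀ x ∈ D, HasDerivAt f (f' x) x)
    (hle : ∀ x ∈ D, x * f' x ≤ f x) :
    AntitoneOn (fun x => f x / x) D := by
  have hderiv : ∀ x ∈ D, HasDerivAt (fun x => f x / x) ((x * f' x - f x) / x ^ 2) x :=
    fun x hx => ((hf x hx).div (hasDerivAt_id' x) (hD0 hx).ne').congr_deriv (by ring)
  refine antitoneOn_of_hasDerivWithinAt_nonpos hD
    (fun x hx => (hderiv x hx).continuousAt.continuousWithinAt)
    (fun x hx => (hderiv x (interior_subset hx)).hasDerivWithinAt) fun x hx => ?_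
  exact div_nonpos_of_nonpos_of_nonneg (by linarith [hle x (interior_subset hx)]) (sq_nonneg x)

lemma LipschitzOnWith.exists_tendsto_nhdsWithin {α : Type*} [PseudoMetricSpace α]
    {f : α → ℝ} {s : Set α} {K : ℝ≥0} (hf : LipschitzOnWith K f s) (a : α) :
    ∃ ℓ, Tendsto f (𝓝[s] a) (𝓝 ℓ) := by
  obtain ⟨g, hg, hfg⟩ := hf.extend_real
  exact ⟨g a, (hg.continuous.continuousAt.tendsto.mono_left nhdsWithin_le_nhds).congr'
    (eventually_nhdsWithin_of_forall fun x hx => (hfg hx).symm)⟩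

lemma lipschitzOnWith_of_abs_hasDerivAt_le {f f' : ℝ → ℝ} {s : Set ℝ} {M : ℝ}
    (hs : Convex ℝ s) (hf : ∀ x ∈ s, HasDerivAt f (f' x) x) (hM : ∀ x ∈ s, |f' x| ≤ M) :
    LipschitzOnWith M.toNNReal f s :=
  hs.lipschitzOnWith_of_nnnorm_hasDerivWithin_le (fun x hx => (hf x hx).hasDerivWithinAt)
    fun x hx => by
      rw [← NNReal.coe_le_coe, coe_nnnorm, Real.norm_eq_abs]
      exact (hM x hx).trans (le_coe_toNNReal M)

lemma tendsto_zero_of_tendsto_div {f g : ℝ → ℝ} {l : Filter ℝ} {ℓ : ℝ}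
    (hfg : Tendsto (fun x => f x / g x) l (𝓝 ℓ)) (hg : Tendsto g l (𝓝 0))
    (hg0 : ∀ᶠ x in l, g x ≠ 0) : Tendsto f l (𝓝 0) :=
  (mul_zero ℓ ▸ hfg.mul hg).congr' <| hg0.mono fun _ hx => div_mul_cancel₀ _ hx

namespace Function.Even

variable {f : ℝ → ℝ}

lemma apply_abs (hf : f.Even) (x : ℝ) : f |x| = f x := by
  rcases abs_choice x with h | h <;> simp [h, hf x]

lemma iteratedDeriv_neg (hf : f.Even) (n : ℕ) (x : ℝ) :
    iteratedDeriv n f (-x) = (-1) ^ n * iteratedDeriv n f x := by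
  have h := iteratedDeriv_comp_neg n f (-x)
  rwa [funext hf, neg_neg, smul_eq_mul] at h

lemma abs_iteratedDeriv (hf : f.Even) (n : ℕ) : (fun x => |iteratedDeriv n f x|).Even :=
  fun x => by simp [hf.iteratedDeriv_neg]

lemma iteratedDeriv_of_even {n : ℕ} (hf : f.Even) (hn : _root_.Even n) :
    (iteratedDeriv n f).Even :=
  fun x => by rw [hf.iteratedDeriv_neg, hn.neg_one_pow, one_mul]

lemma differentiableAt_iteratedDeriv_neg (hf : f.Even) {n : ℕ} {x : ℝ}
    (h : DifferentiableAt ℝ (iteratedDeriv n f) x) :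
    DifferentiableAt ℝ (iteratedDeriv n f) (-x) := by
  have hfun : iteratedDeriv n f = fun y => (-1) ^ n * iteratedDeriv n f (-y) :=
    funext fun y => by rw [← hf.iteratedDeriv_neg, neg_neg]
  rw [hfun]
  exact ((neg_neg x ▸ h).comp (-x) differentiable_neg.differentiableAt).const_mul _

lemma tendsto_nhdsNE_zero {l : Filter ℝ} (hf : f.Even) (h : Tendsto f (𝓝[>] 0) l) :
    Tendsto f (𝓝[≠] 0) l := by
  rw [← funext hf.apply_abs]
  exact h.comp tendsto_abs_nhdsNE_zero

lemma lipschitzWith {K : ℝ≥0} (hf : f.Even) (h : LipschitzOnWith K f (Ici 0)) :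
    LipschitzWith K f :=
  LipschitzWith.of_dist_le_mul fun u v => by
    rw [← hf.apply_abs u, ← hf.apply_abs v]
    refine (h.dist_le_mul _ (abs_nonneg u) _ (abs_nonneg v)).trans ?_
    gcongr
    simpa only [Real.dist_eq] using abs_abs_sub_abs_le_abs_sub u v

lemma abs_sub_le_of_hasDerivAt {f' : ℝ → ℝ} {M : ℝ} (hf : f.Even) (hc : ContinuousAt f 0)
    (hf' : ∀ x, 0 < x → HasDerivAt f (f' x) x) (hM : ∀ x, 0 < x → |f' x| ≤ M) (u v : ℝ) :
    |f u - f v| ≤ M * |u - v| := by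
  have hM0 : 0 ≤ M := (abs_nonneg _).trans (hM 1 one_pos)
  have hIoi := lipschitzOnWith_of_abs_hasDerivAt_le (convex_Ioi 0) hf' hM
  have hcont : ContinuousOn f (closure (Ioi 0)) := by
    rw [closure_Ioi]
    intro x hx
    rcases (mem_Ici.1 hx).eq_or_lt with rfl | hx
    · exact hc.continuousWithinAt
    · exact (hf' x hx).continuousAt.continuousWithinAt
  have hIci := hIoi.closure hcont
  rw [closure_Ioi] at hIci
  simpa [Real.dist_eq, Real.coe_toNNReal _ hM0] using (hf.lipschitzWith hIci).dist_le_mul u v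

lemma bddAbove_abs_iteratedDeriv {n : ℕ} {M : ℝ} (hf : f.Even)
    (hM : ∀ x, 0 < x → |iteratedDeriv n f x| ≤ M) :
    BddAbove ((fun x => |iteratedDeriv n f x|) '' {x : ℝ | x ≠ 0}) := by
  refine ⟨M, ?_⟩
  rintro _ ⟨x, hx, rfl⟩
  dsimp only
  rw [← (hf.abs_iteratedDeriv n).apply_abs x]
  exact hM _ (abs_pos.2 hx)

end Function.Even

section MonotonePrimitive

variable {f : ℝ → ℝ}

lemma norm_le_of_monotoneOn_Ioi (hf : MonotoneOn f (Ioi 0)) (h0 : ∀ x, 0 ≤ f x) {t u : ℝ}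
    (ht : t ∈ Ioc 0 u) : ‖f t‖ ≤ f u := by
  rw [Real.norm_of_nonneg (h0 t)]
  exact hf ht.1 (ht.1.trans_le ht.2) ht.2

lemma intervalIntegrable_of_monotoneOn_Ioi (hf : MonotoneOn f (Ioi 0)) (h0 : ∀ x, 0 ≤ f x)
    (hc : ContinuousOn f (Ioi 0)) {u : ℝ} (hu : 0 ≤ u) : IntervalIntegrable f volume 0 u := by
  rw [intervalIntegrable_iff_integrableOn_Ioc_of_le hu]
  exact ⟨(hc.mono Ioc_subset_Ioi_self).aestronglyMeasurable measurableSet_Ioc,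
    .restrict_of_bounded (C := f u) measure_Ioc_lt_top <| (ae_restrict_iff' measurableSet_Ioc).2 <|
      ae_of_all _ fun t ht => norm_le_of_monotoneOn_Ioi hf h0 ht⟩

variable {L : ℝ → ℝ}

lemma hasDerivAt_integral_abs_of_pos (hL : ∀ x, L x = ∫ t in (0 : ℝ)..|x|, f t)
    (hf : MonotoneOn f (Ioi 0)) (h0 : ∀ x, 0 ≤ f x) (hc : ContinuousOn f (Ioi 0)) {x : ℝ}
    (hx : 0 < x) : HasDerivAt L (f x) x := by
  have hF := intervalIntegral.integral_hasDerivAt_right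
    (intervalIntegrable_of_monotoneOn_Ioi hf h0 hc hx.le)
    (hc.stronglyMeasurableAtFilter isOpen_Ioi x hx) (hc.continuousAt (Ioi_mem_nhds hx))
  refine hF.congr_of_eventuallyEq ?_
  filter_upwards [Ioi_mem_nhds hx] with y hy
  rw [hL, abs_of_pos hy]

lemma hasDerivAt_integral_abs_zero (hL : ∀ x, L x = ∫ t in (0 : ℝ)..|x|, f t)
    (hf : MonotoneOn f (Ioi 0)) (h0 : ∀ x, 0 ≤ f x) (hlim : Tendsto f (𝓝[>] 0) (𝓝 0)) :
    HasDerivAt L 0 0 := by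
  rw [hasDerivAt_iff_tendsto_slope]
  refine squeeze_zero_norm' ?_ (hlim.comp tendsto_abs_nhdsNE_zero)
  filter_upwards [self_mem_nhdsWithin] with y hy
  have hy : 0 < |y| := abs_pos.2 hy
  have hint := intervalIntegral.norm_integral_le_of_norm_le_const (a := 0) (b := |y|) (f := f)
    fun t ht => norm_le_of_monotoneOn_Ioi hf h0 (uIoc_of_le hy.le ▸ ht)
  rw [sub_zero, ← hL, abs_abs] at hint
  rw [slope_def_field, hL 0, abs_zero, intervalIntegral.integral_same, sub_zero, sub_zero,
    norm_div, Real.norm_eq_abs y, div_le_iff₀ hy]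
  exact hint

end MonotonePrimitive

section EvenSecondDerivative

variable {L f₁ f₂ : ℝ → ℝ}

lemma iteratedDeriv_two_eventuallyEq_of_pos (hL : ∀ x, 0 < x → HasDerivAt L (f₁ x) x)
    (hf₁ : ∀ x, 0 < x → HasDerivAt f₁ (f₂ x) x) {x : ℝ} (hx : 0 < x) :
    iteratedDeriv 2 L =ᶠ[𝓝 x] f₂ := by
  filter_upwards [Ioi_mem_nhds hx] with y hy
  have hderiv : deriv L =ᶠ[𝓝 y] f₁ :=
    eventually_of_mem (Ioi_mem_nhds hy) fun z hz => (hL z hz).deriv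
  rw [iteratedDeriv_succ, iteratedDeriv_one, hderiv.deriv_eq, (hf₁ y hy).deriv]

lemma Function.Even.continuousAt_iteratedDeriv_two_zero {ℓ : ℝ} (heven : L.Even)
    (hL0 : HasDerivAt L 0 0) (hL : ∀ x, 0 < x → HasDerivAt L (f₁ x) x)
    (hf₁ : ∀ x, 0 < x → HasDerivAt f₁ (f₂ x) x) (hlim₁ : Tendsto f₁ (𝓝[>] 0) (𝓝 0))
    (hlim₂ : Tendsto f₂ (𝓝[>] 0) (𝓝 ℓ)) : ContinuousAt (iteratedDeriv 2 L) 0 := by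
  have hdiff : ∀ y ≠ 0, DifferentiableAt ℝ (iteratedDeriv 1 L) y := by
    have hpos : ∀ y, 0 < y → DifferentiableAt ℝ (iteratedDeriv 1 L) y := fun y hy =>
      (hf₁ y hy).differentiableAt.congr_of_eventuallyEq <| iteratedDeriv_one (f := L) ▸
        eventually_of_mem (Ioi_mem_nhds hy) fun z hz => (hL z hz).deriv
    intro y hy
    rcases hy.lt_or_gt with hy | hy
    · simpa using heven.differentiableAt_iteratedDeriv_neg (hpos (-y) (neg_pos.2 hy))
    · exact hpos y hy
  have hcont : ContinuousAt (iteratedDeriv 1 L) 0 := by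
    rw [← continuousWithinAt_compl_self, ContinuousWithinAt, iteratedDeriv_one, hL0.deriv,
      tendsto_zero_iff_norm_tendsto_zero]
    refine Function.Even.tendsto_nhdsNE_zero (fun x => ?_) ?_
    · simpa only [iteratedDeriv_one, Real.norm_eq_abs] using heven.abs_iteratedDeriv 1 x
    · refine (tendsto_zero_iff_norm_tendsto_zero.1 hlim₁).congr' ?_
      filter_upwards [self_mem_nhdsWithin] with x hx
      rw [(hL x hx).deriv]
  have hlim : Tendsto (iteratedDeriv 2 L) (𝓝[≠] 0) (𝓝 ℓ) :=
    (heven.iteratedDeriv_of_even even_two).tendsto_nhdsNE_zero <|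
      hlim₂.congr' <| eventually_nhdsWithin_of_forall fun x hx =>
        (iteratedDeriv_two_eventuallyEq_of_pos hL hf₁ hx).eq_of_nhds.symm
  rw [iteratedDeriv_succ] at hlim ⊢
  rw [← continuousWithinAt_compl_self, ContinuousWithinAt,
    (hasDerivAt_of_tendsto_deriv_nhdsNE hdiff hcont hlim).deriv]
  exact hlim

end EvenSecondDerivative

section Drift

variable {d Lp : ℝ → ℝ}

lemma hasDerivAt_mul_exp_integral_inv {a : ℝ} (hd : ContinuousOn d (Ioi 0))
    (hd_pos : ∀ x, 0 < x → 0 < d x) (hLp : ∀ x, Lp x = a * exp (∫ s in (1 : ℝ)..x, 1 / d s))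
    {x : ℝ} (hx : 0 < x) : HasDerivAt Lp (Lp x / d x) x := by
  have hinv : ContinuousOn (fun s => 1 / d s) (Ioi 0) :=
    continuousOn_const.div hd fun s hs => (hd_pos s hs).ne'
  have hΦ := intervalIntegral.integral_hasDerivAt_right
    (hinv.mono fun s hs => (lt_min one_pos hx).trans_le hs.1).intervalIntegrable
    (hinv.stronglyMeasurableAtFilter isOpen_Ioi x hx) (hinv.continuousAt (Ioi_mem_nhds hx))
  rw [funext hLp]
  exact (hΦ.exp.const_mul a).congr_deriv (by ring)

lemma hasDerivAt_div_of_hasDerivAt_div {x : ℝ} (hLp : HasDerivAt Lp (Lp x / d x) x)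
    (hd : DifferentiableAt ℝ d x) (hdx : d x ≠ 0) :
    HasDerivAt (fun y => Lp y / d y) (Lp x / d x * (1 - deriv d x) / d x) x :=
  (hLp.div hd.hasDerivAt hdx).congr_deriv (by field_simp)

lemma abs_mul_one_sub_div_le {r s t C : ℝ} (hr : 0 ≤ r) (ht : 0 < t) (h : |s - 1| ≤ C * t) :
    |r * (1 - s) / t| ≤ C * r := by
  rw [abs_div, abs_mul, abs_of_nonneg hr, abs_of_pos ht, abs_sub_comm, div_le_iff₀ ht]
  calc r * |s - 1| ≤ r * (C * t) := by gcongr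
    _ = C * r * t := by ring

lemma exists_forall_div_le {C X : ℝ} (hd_pos : ∀ x, 0 < x → 0 < d x)
    (hd : ∀ x, 0 < x → DifferentiableAt ℝ d x) (hLp : ∀ x, 0 < x → HasDerivAt Lp (Lp x / d x) x)
    (hLp_nonneg : ∀ x, 0 ≤ Lp x) (hC0 : 0 ≤ C) (hC : ∀ x, 0 < x → |deriv d x - 1| ≤ C * d x)
    (hX : 0 < X) (hlin : ∀ x, X ≤ x → x ≤ d x) : ∃ B, ∀ x, 0 < x → Lp x / d x ≤ B := by
  have hq_nonneg : ∀ x, 0 < x → 0 ≤ Lp x / d x := fun x hx =>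
    div_nonneg (hLp_nonneg x) (hd_pos x hx).le
  have hnear := monotoneOn_mul_exp_of_neg_mul_le_deriv (C := C) (convex_Ioi 0)
    (fun x hx => hasDerivAt_div_of_hasDerivAt_div (hLp x hx) (hd x hx) (hd_pos x hx).ne')
    fun x hx => by
      have := abs_le.1 (abs_mul_one_sub_div_le (hq_nonneg x hx) (hd_pos x hx) (hC x hx))
      linarith
  have hfar := antitoneOn_div_self_of_mul_deriv_le (convex_Ici X) (fun x hx => hX.trans_le hx)
    (fun x hx => hLp x (hX.trans_le hx)) fun x hx => by
      have hdx := hd_pos x (hX.trans_le hx)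
      rw [mul_div_assoc', div_le_iff₀ hdx, mul_comm]
      exact mul_le_mul_of_nonneg_left (hlin x hx) (hLp_nonneg x)
  refine ⟨max (Lp X / d X * exp (C * X)) (Lp X / X), fun x hx => ?_⟩
  rcases le_total x X with hxX | hXx
  · calc Lp x / d x ≤ Lp x / d x * exp (C * x) :=
          le_mul_of_one_le_right (hq_nonneg x hx) (one_le_exp (mul_nonneg hC0 hx.le))
      _ ≤ Lp X / d X * exp (C * X) := hnear hx hX hxX
      _ ≤ _ := le_max_left _ _
  · calc Lp x / d x ≤ Lp x / x := div_le_div_of_nonneg_left (hLp_nonneg x) hx (hlin x hXx)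
      _ ≤ Lp X / X := hfar self_mem_Ici hXx hXx
      _ ≤ _ := le_max_right _ _

lemma exists_forall_abs_deriv_div_le {C X : ℝ} (hd_pos : ∀ x, 0 < x → 0 < d x)
    (hd : ∀ x, 0 < x → DifferentiableAt ℝ d x) (hLp : ∀ x, 0 < x → HasDerivAt Lp (Lp x / d x) x)
    (hLp_nonneg : ∀ x, 0 ≤ Lp x) (hC : ∀ x, 0 < x → |deriv d x - 1| ≤ C * d x) (hX : 0 < X)
    (hlin : ∀ x, X ≤ x → x ≤ d x) :
    ∃ M, ∀ x, 0 < x → |Lp x / d x * (1 - deriv d x) / d x| ≤ M := by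
  have hC0 : 0 ≤ C := nonneg_of_mul_nonneg_left ((abs_nonneg _).trans (hC X hX)) (hd_pos X hX)
  obtain ⟨B, hB⟩ := exists_forall_div_le hd_pos hd hLp hLp_nonneg hC0 hC hX hlin
  exact ⟨C * B, fun x hx => (abs_mul_one_sub_div_le (div_nonneg (hLp_nonneg x) (hd_pos x hx).le)
    (hd_pos x hx) (hC x hx)).trans (mul_le_mul_of_nonneg_left (hB x hx) hC0)⟩

lemma monotoneOn_of_hasDerivAt_div (hd_pos : ∀ x, 0 < x → 0 < d x)
    (hLp : ∀ x, 0 < x → HasDerivAt Lp (Lp x / d x) x) (hLp_nonneg : ∀ x, 0 ≤ Lp x) :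
    MonotoneOn Lp (Ioi 0) := by
  refine monotoneOn_of_hasDerivWithinAt_nonneg (f' := fun x => Lp x / d x) (convex_Ioi 0)
    (fun x hx => (hLp x hx).continuousAt.continuousWithinAt) ?_ ?_ <;> rw [interior_Ioi]
  · exact fun x hx => (hLp x hx).hasDerivWithinAt
  · exact fun x hx => div_nonneg (hLp_nonneg x) (hd_pos x hx).le

end Drift

theorem stmt13_general (d : ℝ → ℝ)
    (hd_cont : ContinuousOn d (Set.Ici 0))
    (hd0 : d 0 = 0)
    (hd_pos : ∀ x : ℝ, 0 < x → 0 < d x)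
    (a : ℝ) (ha : 0 < a)
    (Φ : ℝ → ℝ) (hΦ : ∀ x, Φ x = ∫ s in (1 : ℝ)..x, 1 / d s)
    (Lp : ℝ → ℝ) (hLp : ∀ x, Lp x = a * Real.exp (Φ x))
    (L : ℝ → ℝ) (hL : ∀ x, L x = ∫ t in (0 : ℝ)..|x|, Lp t)
    (hd_C1 : ContDiffOn ℝ 1 d (Set.Ioi 0))
    (C₁ : ℝ) (hC₁ : ∀ x : ℝ, 0 < x → |deriv d x - 1| ≤ C₁ * d x)
    (κ X₁ : ℝ) (hκ : 1 < κ) (hX₁ : 0 < X₁)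
    (hlin : ∀ x : ℝ, X₁ ≤ x → κ * x ≤ d x) :
    (∀ x : ℝ, 0 < x →
      HasDerivAt (iteratedDeriv 2 L)
        (iteratedDeriv 2 L x * (1 - deriv d x) / d x) x) ∧
    (∀ x : ℝ, 0 < x →
      iteratedDeriv 3 L x = iteratedDeriv 2 L x * (1 - deriv d x) / d x) ∧
    BddAbove ((fun x => |iteratedDeriv 3 L x|) '' {x : ℝ | x ≠ 0}) ∧
    (∀ u v : ℝ,
      |iteratedDeriv 2 L u - iteratedDeriv 2 L v|
        ≤ sSup ((fun x => |iteratedDeriv 3 L x|) '' {x : ℝ | x ≠ 0}) * |u - v|) := by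
  have hd : ∀ x, 0 < x → DifferentiableAt ℝ d x := fun x hx =>
    (hd_C1.differentiableOn one_ne_zero x hx).differentiableAt (Ioi_mem_nhds hx)
  have hLp_nonneg : ∀ x, 0 ≤ Lp x := fun x => by rw [hLp]; positivity
  have hLp' : ∀ x, 0 < x → HasDerivAt Lp (Lp x / d x) x := fun x hx =>
    hasDerivAt_mul_exp_integral_inv (hd_cont.mono Ioi_subset_Ici_self) hd_pos
      (fun y => by rw [hLp, hΦ]) hx
  have hq' := fun x (hx : 0 < x) =>
    hasDerivAt_div_of_hasDerivAt_div (hLp' x hx) (hd x hx) (hd_pos x hx).ne'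
  obtain ⟨M, hM⟩ := exists_forall_abs_deriv_div_le hd_pos hd hLp' hLp_nonneg hC₁ hX₁
    fun x hx => by nlinarith [hlin x hx]
  obtain ⟨ℓ, hℓ⟩ :=
    (lipschitzOnWith_of_abs_hasDerivAt_le (convex_Ioi 0) hq' hM).exists_tendsto_nhdsWithin 0
  have hLp0 : Tendsto Lp (𝓝[>] 0) (𝓝 0) := tendsto_zero_of_tendsto_div hℓ
    (by simpa only [ContinuousWithinAt, hd0] using
      (hd_cont 0 self_mem_Ici).mono Ioi_subset_Ici_self)
    (eventually_nhdsWithin_of_forall fun x hx => (hd_pos x hx).ne')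
  have hmono := monotoneOn_of_hasDerivAt_div hd_pos hLp' hLp_nonneg
  have hL' := fun x (hx : 0 < x) => hasDerivAt_integral_abs_of_pos hL hmono hLp_nonneg
    (fun y hy => (hLp' y hy).continuousAt.continuousWithinAt) hx
  have heven : L.Even := fun x => by rw [hL, hL, abs_neg]
  have hL'' := fun x (hx : 0 < x) => iteratedDeriv_two_eventuallyEq_of_pos hL' hLp' hx
  have hL''' : ∀ x, 0 < x → HasDerivAt (iteratedDeriv 2 L)
      (iteratedDeriv 2 L x * (1 - deriv d x) / d x) x := fun x hx => by
    rw [(hL'' x hx).eq_of_nhds]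
    exact (hq' x hx).congr_of_eventuallyEq (hL'' x hx)
  have hL'''_eq : ∀ x, 0 < x →
      iteratedDeriv 3 L x = iteratedDeriv 2 L x * (1 - deriv d x) / d x := fun x hx =>
    iteratedDeriv_succ (f := L) ▸ (hL''' x hx).deriv
  have hbdd := heven.bddAbove_abs_iteratedDeriv (n := 3) fun x hx => by
    rw [hL'''_eq x hx, (hL'' x hx).eq_of_nhds]
    exact hM x hx
  refine ⟨hL''', hL'''_eq, hbdd, (heven.iteratedDeriv_of_even even_two).abs_sub_le_of_hasDerivAt
    (heven.continuousAt_iteratedDeriv_two_zero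
      (hasDerivAt_integral_abs_zero hL hmono hLp_nonneg hLp0) hL' hLp' hLp0 hℓ)
    (fun x hx => hL'''_eq x hx ▸ hL''' x hx) fun x hx => le_csSup hbdd ⟨x, hx.ne', rfl⟩⟩

/-- For the drift-to-loss construction (drift `d` continuous, `d(0)=0`,
`d>0` on `(0,∞)`, `|d(x)−x| ≤ C₀x²` near `0`; `Φ(x)=∫₁ˣ ds/d(s)`, `L₊'(x)=a e^{Φ(x)}`,
`L(x)=∫₀^{|x|} L₊'`), if additionally `d` is `C¹` on `(0,∞)` with
`C₁ := sup_{x>0} |d'(x)−1|/d(x) < ∞` and `d(x) ≥ κx` for `x ≥ X₁` with `κ > 1`, then for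
every `x > 0` the third derivative exists with `L'''(x) = L''(x)(1 − d'(x))/d(x)`, the
supremum `sup_{x≠0}|L'''(x)|` is finite, and `L''` is globally Lipschitz with constant
`2M = sup_{x≠0}|L'''(x)|`. -/
theorem stmt13 (d : ℝ → ℝ)
    (hd_cont : ContinuousOn d (Set.Ici 0))
    (hd0 : d 0 = 0)
    (hd_pos : ∀ x : ℝ, 0 < x → 0 < d x)
    (hd_nonneg : ∀ x : ℝ, 0 ≤ x → 0 ≤ d x)
    (δ C₀ : ℝ) (hδ : 0 < δ)
    (hquad : ∀ x ∈ Set.Icc (0 : ℝ) δ, |d x - x| ≤ C₀ * x ^ 2)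
    (a : ℝ) (ha : 0 < a)
    (Φ : ℝ → ℝ) (hΦ : ∀ x, Φ x = ∫ s in (1 : ℝ)..x, 1 / d s)
    (Lp : ℝ → ℝ) (hLp : ∀ x, Lp x = a * Real.exp (Φ x))
    (L : ℝ → ℝ) (hL : ∀ x, L x = ∫ t in (0 : ℝ)..|x|, Lp t)
    (hd_C1 : ContDiffOn ℝ 1 d (Set.Ioi 0))
    (C₁ : ℝ) (hC₁ : ∀ x : ℝ, 0 < x → |deriv d x - 1| ≤ C₁ * d x)
    (κ X₁ : ℝ) (hκ : 1 < κ) (hX₁ : 0 < X₁)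
    (hlin : ∀ x : ℝ, X₁ ≤ x → κ * x ≤ d x) :
    (∀ x : ℝ, 0 < x →
      HasDerivAt (iteratedDeriv 2 L)
        (iteratedDeriv 2 L x * (1 - deriv d x) / d x) x) ∧
    (∀ x : ℝ, 0 < x →
      iteratedDeriv 3 L x = iteratedDeriv 2 L x * (1 - deriv d x) / d x) ∧
    BddAbove ((fun x => |iteratedDeriv 3 L x|) '' {x : ℝ | x ≠ 0}) ∧
    (∀ u v : ℝ,
      |iteratedDeriv 2 L u - iteratedDeriv 2 L v|
        ≤ sSup ((fun x => |iteratedDeriv 3 L x|) '' {x : ℝ | x ≠ 0}) * |u - v|) :=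
  stmt13_general d hd_cont hd0 hd_pos a ha Φ hΦ Lp hLp L hL hd_C1 C₁ hC₁ κ X₁ hκ hX₁ hlin
end

section
/- Fix C > 0 and let L : ℝ → ℝ be given by L(x) = C(|x| − ln(1 + |x|)). Then L is even, convex, and C² on ℝ, with L'(x) = C x/(1 + |x|) and L''(x) = C/(1 + |x|)² > 0, L'' is globally Lipschitz, and for all x ≠ 0 one has L'(x)/L''(x) = x(1 + |x|). Consequently the classical Newton iteration x_{k+1} = x_k − L'(x_k)/L''(x_k) satisfies x_{k+1} = −x_k |x_k|, hence |x_{k+1}| = x_k²; in particular the Newton iterates diverge whenever |x_0| > 1. -/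
/-!
Away from `0` both derivatives follow from the chain and quotient rules, using
`sign x * |x| = x`; at `0`, where `|·|` is not differentiable, the formulas persist because
both the functions and their candidate derivatives are continuous there. Then
`L'/L'' = x(1 + |x|)`, so a Newton step sends `x` to `-x|x|` and `|x_k| = |x_0| ^ 2 ^ k`.
-/

open Filter Real

theorem hasDerivAt_abs_sub_log_one_add_abs (x : ℝ) :
    HasDerivAt (fun y => |y| - log (1 + |y|)) (x / (1 + |x|)) x := by
  have hne : ∀ y ≠ (0 : ℝ),
      HasDerivAt (fun y => |y| - log (1 + |y|)) (y / (1 + |y|)) y := by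
    intro y hy
    have hpos : 0 < 1 + |y| := by positivity
    refine ((hasDerivAt_abs hy).sub
      (((hasDerivAt_abs hy).const_add 1).log hpos.ne')).congr_deriv ?_
    field_simp
    rw [add_sub_cancel_left, sign_mul_abs]
  exact hasDerivAt_of_hasDerivAt_of_ne' hne (by fun_prop (disch := positivity))
    (by fun_prop (disch := positivity)) x

theorem hasDerivAt_div_one_add_abs (x : ℝ) :
    HasDerivAt (fun y => y / (1 + |y|)) ((1 + |x|) ^ 2)⁻¹ x := by
  have hne : ∀ y ≠ (0 : ℝ), HasDerivAt (fun y => y / (1 + |y|)) ((1 + |y|) ^ 2)⁻¹ y := by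
    intro y hy
    have hpos : 0 < 1 + |y| := by positivity
    refine ((hasDerivAt_id' y).div ((hasDerivAt_abs hy).const_add 1) hpos.ne').congr_deriv ?_
    rw [self_mul_sign]
    ring
  exact hasDerivAt_of_hasDerivAt_of_ne' hne (by fun_prop (disch := positivity))
    (by fun_prop (disch := positivity)) x

theorem abs_inv_sq_sub_inv_sq_le {p q : ℝ} (hp : 1 ≤ p) (hq : 1 ≤ q) :
    |(p ^ 2)⁻¹ - (q ^ 2)⁻¹| ≤ 2 * |p - q| := by
  have hp0 : 0 < p := by linarith
  have hq0 : 0 < q := by linarith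
  have hdiff : |p⁻¹ - q⁻¹| ≤ |p - q| := by
    rw [inv_sub_inv hp0.ne' hq0.ne', abs_div, abs_sub_comm, abs_of_pos (mul_pos hp0 hq0)]
    exact div_le_self (abs_nonneg _) (by nlinarith)
  have hsum : |p⁻¹ + q⁻¹| ≤ 2 := by
    rw [abs_of_pos (by positivity)]
    linarith [inv_le_one_of_one_le₀ hp, inv_le_one_of_one_le₀ hq]
  calc |(p ^ 2)⁻¹ - (q ^ 2)⁻¹| = |p⁻¹ + q⁻¹| * |p⁻¹ - q⁻¹| := by
        rw [← abs_mul]; congr 1; ring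
    _ ≤ 2 * |p - q| := mul_le_mul hsum hdiff (abs_nonneg _) zero_le_two

theorem abs_inv_one_add_abs_sq_sub_le (u v : ℝ) :
    |((1 + |u|) ^ 2)⁻¹ - ((1 + |v|) ^ 2)⁻¹| ≤ 2 * |u - v| :=
  calc |((1 + |u|) ^ 2)⁻¹ - ((1 + |v|) ^ 2)⁻¹| ≤ 2 * |(1 + |u|) - (1 + |v|)| :=
        abs_inv_sq_sub_inv_sq_le (by simp) (by simp)
    _ ≤ 2 * |u - v| := by
        rw [add_sub_add_left_eq_sub]
        exact mul_le_mul_of_nonneg_left (abs_abs_sub_abs_le_abs_sub u v) zero_le_two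

theorem eq_pow_two_pow_of_succ_eq_sq {M : Type*} [Monoid M] {a : ℕ → M}
    (h : ∀ k, a (k + 1) = a k ^ 2) (k : ℕ) : a k = a 0 ^ 2 ^ k := by
  induction k with
  | zero => simp
  | succ k ih => rw [h, ih, ← pow_mul, pow_succ]

theorem tendsto_atTop_of_succ_eq_sq {a : ℕ → ℝ} (h : ∀ k, a (k + 1) = a k ^ 2)
    (h0 : 1 < a 0) : Tendsto a atTop atTop := by
  rw [funext (eq_pow_two_pow_of_succ_eq_sq h)]
  exact (tendsto_pow_atTop_atTop_of_one_lt h0).comp (tendsto_pow_atTop_atTop_of_one_lt one_lt_two)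

/-- For `L(x) = C(|x| − ln(1+|x|))` with `C > 0`: `L` is even, convex, `C²`,
with `L'(x) = Cx/(1+|x|)`, `L''(x) = C/(1+|x|)² > 0`, `L''` globally Lipschitz, and
`L'(x)/L''(x) = x(1+|x|)` for `x ≠ 0`; consequently the Newton iteration satisfies
`x_{k+1} = −x_k|x_k|`, hence `|x_{k+1}| = x_k²`, and diverges whenever `|x₀| > 1`. -/
theorem stmt14 (C : ℝ) (hC : 0 < C)
    (L : ℝ → ℝ) (hLdef : ∀ x, L x = C * (|x| - Real.log (1 + |x|))) :
    (∀ x, L (-x) = L x) ∧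
    ConvexOn ℝ Set.univ L ∧
    ContDiff ℝ 2 L ∧
    (∀ x : ℝ, deriv L x = C * x / (1 + |x|)) ∧
    (∀ x : ℝ, iteratedDeriv 2 L x = C / (1 + |x|) ^ 2) ∧
    (∀ x : ℝ, 0 < iteratedDeriv 2 L x) ∧
    (∃ C' : ℝ, ∀ u v : ℝ,
      |iteratedDeriv 2 L u - iteratedDeriv 2 L v| ≤ C' * |u - v|) ∧
    (∀ x : ℝ, x ≠ 0 → deriv L x / iteratedDeriv 2 L x = x * (1 + |x|)) ∧
    (∀ x : ℕ → ℝ,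
      (∀ k, x (k + 1) = x k - deriv L (x k) / iteratedDeriv 2 L (x k)) →
      (∀ k, x (k + 1) = -(x k) * |x k|) ∧
      (∀ k, |x (k + 1)| = (x k) ^ 2) ∧
      (1 < |x 0| → Filter.Tendsto (fun k => |x k|) Filter.atTop Filter.atTop)) := by
  have hL' : ∀ y, HasDerivAt L (C * (y / (1 + |y|))) y := fun y => by
    simpa only [funext hLdef] using (hasDerivAt_abs_sub_log_one_add_abs y).const_mul C
  have hderiv : deriv L = fun y => C * (y / (1 + |y|)) := funext fun y => (hL' y).deriv
  have hL'' : ∀ y, HasDerivAt (deriv L) (C * ((1 + |y|) ^ 2)⁻¹) y := fun y =>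
    hderiv ▸ (hasDerivAt_div_one_add_abs y).const_mul C
  have hderiv2 : iteratedDeriv 2 L = fun y => C * ((1 + |y|) ^ 2)⁻¹ := by
    rw [iteratedDeriv_eq_iterate]
    exact funext fun y => (hL'' y).deriv
  have hpos : ∀ y, 0 < iteratedDeriv 2 L y := fun y => by rw [hderiv2]; positivity
  have hratio : ∀ y, deriv L y / iteratedDeriv 2 L y = y * (1 + |y|) := fun y => by
    rw [hderiv, hderiv2]; field_simp
  have hdiff : Differentiable ℝ L := fun y => (hL' y).differentiableAt
  have hdiff' : Differentiable ℝ (deriv L) := fun y => (hL'' y).differentiableAt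
  refine ⟨fun y => by simp only [hLdef, abs_neg], ?_, ?_, fun y => by rw [hderiv, mul_div_assoc],
    fun y => by rw [hderiv2, div_eq_mul_inv], hpos, ⟨2 * C, fun u v => ?_⟩, fun y _ => hratio y,
    fun x hx => ?_⟩
  · exact convexOn_univ_of_deriv2_nonneg hdiff hdiff' fun y => by
      rw [← iteratedDeriv_eq_iterate]; exact (hpos y).le
  · refine contDiff_succ_iff_deriv.mpr
      ⟨hdiff, by simp, contDiff_one_iff_deriv.mpr ⟨hdiff', ?_⟩⟩
    have hcont : Continuous (iteratedDeriv 2 L) := by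
      rw [hderiv2]; fun_prop (disch := intro; positivity)
    rwa [iteratedDeriv_eq_iterate] at hcont
  · rw [hderiv2, ← mul_sub, abs_mul, abs_of_pos hC, mul_comm 2 C, mul_assoc]
    exact mul_le_mul_of_nonneg_left (abs_inv_one_add_abs_sq_sub_le u v) hC.le
  · have hstep : ∀ k, x (k + 1) = -(x k) * |x k| := fun k => by rw [hx, hratio]; ring
    have hsq : ∀ k, |x (k + 1)| = x k ^ 2 := fun k => by
      rw [hstep, abs_mul, abs_neg, abs_abs, ← sq, sq_abs]
    exact ⟨hstep, hsq, tendsto_atTop_of_succ_eq_sq (a := fun k => |x k|) fun k => by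
      rw [hsq, sq_abs]⟩
end

section
/- Let y ∈ {0, 1}, u ∈ ℝ, and set p = σ(u) = 1/(1 + e^{−u}). Define the binary cross entropy l(u, y) := −(y log p + (1 − y) log(1 − p)), its gradient g := p − y, and its Hessian h := p(1 − p) > 0. Then the Newton decrement satisfies g²/h ≥ l(u, y); explicitly, if y = 1 then g²/h = (1 − p)/p ≥ −log p, and if y = 0 then g²/h = p/(1 − p) ≥ −log(1 − p). In particular binary cross entropy is pointwise Hessian-dominated with constant c = 1. -/
/-! For `y = 1` the decrement `(p - 1)² / (p(1 - p))` simplifies to `(1 - p)/p = 1/p - 1`, and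
`log x ≤ x - 1` at `x = 1/p` gives `1/p - 1 ≥ -log p`, the loss. The case `y = 0` is the same
argument for `1 - p`. -/

open Real

lemma sigmoid_pos (u : ℝ) : 0 < 1 / (1 + exp (-u)) := by positivity

lemma sigmoid_lt_one (u : ℝ) : 1 / (1 + exp (-u)) < 1 := by
  rw [div_lt_one (by positivity)]
  linarith [exp_pos (-u)]

lemma neg_log_le_one_sub_div {x : ℝ} (hx : 0 < x) : -log x ≤ (1 - x) / x := by
  have h := log_le_sub_one_of_pos (inv_pos.mpr hx)
  rw [log_inv, inv_eq_one_div] at h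
  rwa [sub_div, div_self hx.ne']

lemma sq_sub_one_div_mul_one_sub {p : ℝ} (hp : p ≠ 0) (hp' : 1 - p ≠ 0) :
    (p - 1) ^ 2 / (p * (1 - p)) = (1 - p) / p := by
  field_simp
  ring

lemma sq_div_mul_one_sub {p : ℝ} (hp : p ≠ 0) (hp' : 1 - p ≠ 0) :
    p ^ 2 / (p * (1 - p)) = p / (1 - p) := by
  field_simp

/-- Binary cross entropy is pointwise Hessian-dominated with constant `c = 1`:
for `y ∈ {0,1}`, `u ∈ ℝ`, `p = σ(u)`, `l = −(y log p + (1−y) log(1−p))`, `g = p − y` and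
`h = p(1−p) > 0`, the Newton decrement satisfies `g²/h ≥ l`; explicitly `g²/h = (1−p)/p ≥
−log p` when `y = 1` and `g²/h = p/(1−p) ≥ −log(1−p)` when `y = 0`. -/
theorem stmt17 (y : ℝ) (hy : y = 0 ∨ y = 1) (u : ℝ)
    (p l g h : ℝ)
    (hp : p = 1 / (1 + Real.exp (-u)))
    (hl : l = -(y * Real.log p + (1 - y) * Real.log (1 - p)))
    (hg : g = p - y)
    (hh : h = p * (1 - p)) :
    0 < h ∧
    g ^ 2 / h ≥ l ∧
    (y = 1 → g ^ 2 / h = (1 - p) / p ∧ (1 - p) / p ≥ -Real.log p) ∧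
    (y = 0 → g ^ 2 / h = p / (1 - p) ∧ p / (1 - p) ≥ -Real.log (1 - p)) := by
  have hp0 : 0 < p := hp ▸ sigmoid_pos u
  have hp1 : 0 < 1 - p := sub_pos.mpr (hp ▸ sigmoid_lt_one u)
  have case_one : y = 1 → g ^ 2 / h = (1 - p) / p ∧ (1 - p) / p ≥ -log p := by
    rintro rfl
    rw [hg, hh, sq_sub_one_div_mul_one_sub hp0.ne' hp1.ne']
    exact ⟨rfl, neg_log_le_one_sub_div hp0⟩
  have case_zero : y = 0 → g ^ 2 / h = p / (1 - p) ∧ p / (1 - p) ≥ -log (1 - p) := by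
    rintro rfl
    rw [hg, hh, sub_zero, sq_div_mul_one_sub hp0.ne' hp1.ne']
    refine ⟨rfl, ?_⟩
    simpa using neg_log_le_one_sub_div hp1
  refine ⟨hh ▸ mul_pos hp0 hp1, ?_, case_one, case_zero⟩
  rcases hy with rfl | rfl
  · obtain ⟨hdec, hle⟩ := case_zero rfl
    simpa [hl, hdec] using hle
  · obtain ⟨hdec, hle⟩ := case_one rfl
    simpa [hl, hdec] using hle
end
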